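/- arXiv:math/0406614 — 8 statements merged into one kernel-verified Lean document; each statement's English description precedes it below -/
import Mathlib

section
/- Let F be a finite field with q elements and let n, k be natural numbers. The function σ_k on GL(n,F) defined by σ_k(g) = q^{k·r(g)} is positive definite: for every m, every g₁,…,g_m ∈ GL(n,F) and every c₁,…,c_m ∈ ℂ, the sum Σ_{i,j} c_i·conj(c_j)·q^{k·r(g_i·g_j^{-1})} is a real number ≥ 0. -/
/-!
Since `r(g) = dim ker (g - 1)`, the number `q ^ (k * r(g))` counts the vectors of `(F^n)^k` fixed
by `g`, so `σ_k` is the permutation character of `GL(n, F)` acting on `(F^n)^k`. Permutation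
characters of finite `G`-sets are positive definite: `g_i g_j⁻¹ x = x` iff `g_i⁻¹ x = g_j⁻¹ x`, so
`Σ c_i c̄_j #fix(g_i g_j⁻¹) = Σ_{x,y} |Σ_i c_i [g_i⁻¹ x = y]|² ≥ 0`.
-/

open scoped ComplexOrder

/-- The dimension of the space of vectors fixed by `g`, i.e. `r(g) = dim ker (g - 1)`. -/
noncomputable def fixedDim {F : Type*} [Field F] {n : ℕ}
    (g : GL (Fin n) F) : ℕ :=
  Module.finrank F (LinearMap.ker (Matrix.mulVecLin ((g : Matrix (Fin n) (Fin n) F) - 1)))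

open Finset MulAction

namespace Matrix

variable {R ι : Type*} [CommRing R] [PartialOrder R] [StarRing R] [Fintype ι]

theorem posSemidef_card_filter_eq [StarOrderedRing R] {X Y : Type*} [Fintype X] [Fintype Y]
    [DecidableEq Y] (a : ι → X → Y) : (of fun i j => (#{x | a i x = a j x} : R)).PosSemidef := by
  let A : Matrix (X × Y) ι R := of fun p i => if a i p.1 = p.2 then 1 else 0
  convert posSemidef_conjTranspose_mul_self A using 1
  ext i j
  simp only [A, of_apply, mul_apply, conjTranspose_apply, Fintype.sum_prod_type]
  simp [apply_ite star, sum_boole]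

theorem PosSemidef.sum_mul_star_mul_nonneg {M : Matrix ι ι R} (hM : M.PosSemidef) (c : ι → R) :
    0 ≤ ∑ i, ∑ j, c i * star (c j) * M i j := by
  convert hM.dotProduct_mulVec_nonneg (star c) using 1
  simp [dotProduct, mulVec, mul_sum, mul_comm, mul_left_comm]

end Matrix

namespace MulAction

variable {G X : Type*} [Group G] [MulAction G X]

theorem posSemidef_card_fixedBy {R ι : Type*} [CommRing R] [PartialOrder R] [StarRing R]
    [StarOrderedRing R] [Fintype ι] [Fintype X] (g : ι → G) :
    (Matrix.of fun i j => (Nat.card (fixedBy X (g i * (g j)⁻¹)) : R)).PosSemidef := by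
  classical
  convert Matrix.posSemidef_card_filter_eq (R := R) fun i (x : X) => (g i)⁻¹ • x using 1
  ext i j
  rw [Matrix.of_apply, Matrix.of_apply, ← Fintype.card_subtype, ← Nat.card_eq_fintype_card]
  exact congrArg _ <| Nat.card_congr <| Equiv.subtypeEquivRight fun x => by
    rw [mem_fixedBy, mul_smul, smul_eq_iff_eq_inv_smul, eq_comm]

theorem card_fixedBy_pi (ι : Type*) [Fintype ι] (g : G) :
    Nat.card (fixedBy (ι → X) g) = Nat.card (fixedBy X g) ^ Fintype.card ι := by
  rw [← Nat.card_eq_fintype_card, ← Nat.card_fun]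
  refine Nat.card_congr <| (Equiv.subtypeEquivRight fun v => ?_).trans
    (Equiv.subtypePiEquivPi (p := fun _ x => g • x = x))
  simp [mem_fixedBy, funext_iff]

end MulAction

namespace Matrix.GeneralLinearGroup

variable {n R : Type*} [Fintype n] [DecidableEq n] [CommRing R]

instance : MulAction (GL n R) (n → R) where
  smul g v := (g : Matrix n n R) *ᵥ v
  one_smul := one_mulVec
  mul_smul g h v := (mulVec_mulVec v (g : Matrix n n R) h).symm

theorem smul_def (g : GL n R) (v : n → R) : g • v = (g : Matrix n n R) *ᵥ v := rfl

end Matrix.GeneralLinearGroup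

theorem card_fixedBy_eq_pow_fixedDim {F : Type*} [Field F] [Fintype F] {n : ℕ}
    (g : GL (Fin n) F) : Nat.card (fixedBy (Fin n → F) g) = Fintype.card F ^ fixedDim g := by
  classical
  have hfix : fixedBy (Fin n → F) g =
      LinearMap.ker (Matrix.mulVecLin ((g : Matrix (Fin n) (Fin n) F) - 1)) := by
    ext v
    simp [Matrix.GeneralLinearGroup.smul_def, sub_eq_zero]
  rw [hfix, Nat.card_eq_fintype_card, fixedDim]
  exact Module.card_eq_pow_finrank

/-- The Thoma character `σ_k(g) = q^(k * r(g))` is positive definite on `GL(n, F_q)`: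
for all `g₁, …, g_m` and complex `c₁, …, c_m`, the sum
`Σ_{i,j} c_i * conj (c_j) * q^(k * r(g_i * g_j⁻¹))` is a nonnegative real number.
(Nonnegativity in the partial order of `ℂ` means exactly that the number is real and `≥ 0`.) -/
theorem thoma_character_posDef {F : Type*} [Field F] [Fintype F]
    (q n k : ℕ) (hq : Fintype.card F = q)
    (m : ℕ) (g : Fin m → GL (Fin n) F) (c : Fin m → ℂ) :
    0 ≤ ∑ i : Fin m, ∑ j : Fin m,
        c i * (starRingEnd ℂ) (c j) * (q : ℂ) ^ (k * fixedDim (g i * (g j)⁻¹)) := by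
  have hcount (h : GL (Fin n) F) :
      (q : ℂ) ^ (k * fixedDim h) = Nat.card (fixedBy (Fin k → Fin n → F) h) := by
    rw [card_fixedBy_pi, card_fixedBy_eq_pow_fixedDim, hq, Fintype.card_fin]
    push_cast
    ring
  simp_rw [hcount]
  exact (posSemidef_card_fixedBy g).sum_mul_star_mul_nonneg c
end

section
/- Let F be a finite field with q elements and n ≥ 1, and assume n ≥ 2 or q ≥ 3. Then the n+1 functions σ_k : GL(n,F) → ℂ, σ_k(g) = q^{k·r(g)} for k = 0,1,…,n, are linearly independent over ℂ, and every function f : GL(n,F) → ℂ satisfying f(g) = f(h) whenever r(g) = r(h) is a ℂ-linear combination of σ_0,…,σ_n. In particular the space of such functions has dimension n+1. -/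
open Matrix

section Aux

variable {F : Type*} [Field F] {n : ℕ}

lemma isUnit_of_mulVec_ker (A : Matrix (Fin n) (Fin n) F)
    (h : ∀ v, A.mulVec v = 0 → v = 0) : IsUnit A := by
  rw [← Matrix.mulVec_injective_iff_isUnit]
  intro x y hxy
  exact sub_eq_zero.mp (h (x - y) (by rw [Matrix.mulVec_sub, hxy, sub_self]))

lemma fixedDim_upper [Fintype F] (g : GL (Fin n) F) : fixedDim g ≤ n := by
  have := Submodule.finrank_le (R := F) (M := Fin n → F)
    (LinearMap.ker (Matrix.mulVecLin ((g : Matrix (Fin n) (Fin n) F) - 1)))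
  rw [Module.finrank_fin_fun] at this
  exact this

/-- the "Jordan" nilpotent part with kernel of dimension `r` (for `1 ≤ r ≤ n`). -/
def jordanN (n r : ℕ) (F : Type*) [Field F] : Matrix (Fin n) (Fin n) F :=
  Matrix.of fun i : Fin n =>
    if h : (i : ℕ) + 1 < n ∧ r ≤ (i : ℕ) + 1 then Pi.single (⟨(i : ℕ) + 1, h.1⟩ : Fin n) 1 else 0

lemma jordanN_mulVec (r : ℕ) (v : Fin n → F) (i : Fin n) :
    (jordanN n r F).mulVec v i =
      if h : (i : ℕ) + 1 < n ∧ r ≤ (i : ℕ) + 1 then v ⟨(i : ℕ) + 1, h.1⟩ else 0 := by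
  show (if h : (i : ℕ) + 1 < n ∧ r ≤ (i : ℕ) + 1
      then Pi.single (⟨(i : ℕ) + 1, h.1⟩ : Fin n) (1 : F) else 0) ⬝ᵥ v = _
  split
  · rw [single_dotProduct, one_mul]
  · rw [zero_dotProduct]

/-- the embedding of F^r into F^n by extension with zero -/
def embZero (n r : ℕ) (F : Type*) [Field F] : (Fin r → F) →ₗ[F] (Fin n → F) where
  toFun w := fun j => if h : (j : ℕ) < r then w ⟨j, h⟩ else 0
  map_add' w₁ w₂ := by funext j; by_cases h : (j : ℕ) < r <;> simp [h]
  map_smul' c w := by funext j; by_cases h : (j : ℕ) < r <;> simp [h]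

lemma embZero_injective (hr : r ≤ n) : Function.Injective (embZero n r F) := by
  intro w₁ w₂ h
  funext i
  have := congrFun h ⟨(i : ℕ), lt_of_lt_of_le i.2 hr⟩
  simpa [embZero] using this

lemma range_embZero_eq_ker (hr1 : 1 ≤ r) (hrn : r ≤ n) :
    LinearMap.range (embZero n r F) = LinearMap.ker (mulVecLin (jordanN n r F)) := by
  ext v
  constructor
  · rintro ⟨w, rfl⟩
    rw [LinearMap.mem_ker]
    funext i
    rw [mulVecLin_apply, jordanN_mulVec]
    split
    · rename_i h
      have : ¬ ((⟨(i : ℕ) + 1, h.1⟩ : Fin n) : ℕ) < r := by simp; omega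
      simp [embZero, this]
    · rfl
  · intro hv
    refine ⟨fun i => v ⟨(i : ℕ), lt_of_lt_of_le i.2 hrn⟩, ?_⟩
    funext j
    show (if h : (j : ℕ) < r then v ⟨(j : ℕ), _⟩ else 0) = v j
    split
    · congr 1
    · rename_i h
      have hj : r ≤ (j : ℕ) := le_of_not_gt h
      have h1 : 1 ≤ (j : ℕ) := le_trans hr1 hj
      have hrow := congrFun (LinearMap.mem_ker.mp hv) ⟨(j : ℕ) - 1, by omega⟩
      rw [mulVecLin_apply, jordanN_mulVec] at hrow
      have hcond : ((j : ℕ) - 1) + 1 < n ∧ r ≤ ((j : ℕ) - 1) + 1 := by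
        constructor <;> omega
      rw [dif_pos hcond] at hrow
      have : (⟨((j : ℕ) - 1) + 1, hcond.1⟩ : Fin n) = j := by
        apply Fin.ext; simp; omega
      rw [this] at hrow
      exact hrow.symm

lemma exists_fixedDim_pos (r : ℕ) (hr1 : 1 ≤ r) (hrn : r ≤ n) :
    ∃ g : GL (Fin n) F, fixedDim g = r := by
  set N := jordanN n r F with hN
  -- invertibility of 1 + N
  have hker : ∀ v : Fin n → F, (1 + N).mulVec v = 0 → v = 0 := by
    intro v hv
    have hrow : ∀ i : Fin n, v i +
        (if h : (i : ℕ) + 1 < n ∧ r ≤ (i : ℕ) + 1 then v ⟨(i : ℕ) + 1, h.1⟩ else 0) = 0 := by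
      intro i
      have := congrFun hv i
      rw [Matrix.add_mulVec, Matrix.one_mulVec, Pi.add_apply, jordanN_mulVec] at this
      simpa using this
    have key : ∀ m : ℕ, ∀ i : Fin n, n ≤ (i : ℕ) + m + 1 → v i = 0 := by
      intro m
      induction m with
      | zero =>
        intro i hi
        have := hrow i
        rw [dif_neg (by omega)] at this
        simpa using this
      | succ m ih =>
        intro i hi
        have := hrow i
        by_cases h : (i : ℕ) + 1 < n ∧ r ≤ (i : ℕ) + 1
        · rw [dif_pos h, ih ⟨(i : ℕ) + 1, h.1⟩ (by simp; omega)] at this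
          simpa using this
        · rw [dif_neg h] at this
          simpa using this
    funext i
    exact key n i (by omega)
  have hu : IsUnit (1 + N) := isUnit_of_mulVec_ker _ hker
  refine ⟨hu.unit, ?_⟩
  have hcoe : ((hu.unit : GL (Fin n) F) : Matrix (Fin n) (Fin n) F) = 1 + N := hu.unit_spec
  rw [fixedDim, hcoe]
  rw [add_sub_cancel_left, ← range_embZero_eq_ker hr1 hrn,
    LinearMap.finrank_range_of_inj (embZero_injective hrn)]
  simp

lemma exists_fixedDim_zero_of_big [Fintype F] (hq : 3 ≤ Fintype.card F) :
    ∃ g : GL (Fin n) F, fixedDim g = 0 := by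
  -- pick a ∉ {0, 1}
  obtain ⟨a, ha0, ha1⟩ : ∃ a : F, a ≠ 0 ∧ a ≠ 1 := by
    classical
    by_contra hcon
    push_neg at hcon
    have hsub : (Finset.univ : Finset F) ⊆ {0, 1} := by
      intro a _
      rcases eq_or_ne a 0 with h | h
      · simp [h]
      · simp [hcon a h]
    have := Finset.card_le_card hsub
    rw [Finset.card_univ] at this
    have h2 : ({0, 1} : Finset F).card ≤ 2 := Finset.card_insert_le _ _ |>.trans (by simp)
    omega
  set A : Matrix (Fin n) (Fin n) F := a • 1 with hA
  have hu : IsUnit A := by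
    apply isUnit_of_mulVec_ker
    intro v hv
    rw [hA, Matrix.smul_mulVec, Matrix.one_mulVec] at hv
    exact (smul_eq_zero.mp hv).resolve_left ha0
  refine ⟨hu.unit, ?_⟩
  have hcoe : ((hu.unit : GL (Fin n) F) : Matrix (Fin n) (Fin n) F) = A := hu.unit_spec
  rw [fixedDim, hcoe]
  have hker : LinearMap.ker (mulVecLin (A - 1)) = ⊥ := by
    rw [LinearMap.ker_eq_bot']
    intro v hv
    rw [mulVecLin_apply, hA, Matrix.sub_mulVec, Matrix.smul_mulVec,
      Matrix.one_mulVec] at hv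
    have hv' : (a - 1) • v = 0 := by rw [sub_smul, one_smul]; exact hv
    exact (smul_eq_zero.mp hv').resolve_left (sub_ne_zero.mpr ha1)
  rw [hker]
  simp

end Aux

section Cyc

variable {F : Type*} [Field F] {n : ℕ}

/-- cyclic-type matrix with no nonzero fixed vector, for `n ≥ 2` -/
def cyc (n : ℕ) (hn : 2 ≤ n) (F : Type*) [Field F] : Matrix (Fin n) (Fin n) F :=
  Matrix.of fun i : Fin n =>
    if h : (i : ℕ) + 1 < n then Pi.single (⟨(i : ℕ) + 1, h⟩ : Fin n) 1
    else Pi.single (⟨0, by omega⟩ : Fin n) 1 + Pi.single (⟨1, by omega⟩ : Fin n) 1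

lemma cyc_mulVec (hn : 2 ≤ n) (v : Fin n → F) (i : Fin n) :
    (cyc n hn F).mulVec v i =
      if h : (i : ℕ) + 1 < n then v ⟨(i : ℕ) + 1, h⟩
      else v ⟨0, by omega⟩ + v ⟨1, by omega⟩ := by
  show (if h : (i : ℕ) + 1 < n then Pi.single (⟨(i : ℕ) + 1, h⟩ : Fin n) (1 : F)
      else Pi.single (⟨0, by omega⟩ : Fin n) 1 + Pi.single (⟨1, by omega⟩ : Fin n) 1) ⬝ᵥ v = _
  split
  · rw [single_dotProduct, one_mul]
  · rw [add_dotProduct, single_dotProduct, single_dotProduct,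
      one_mul, one_mul]

lemma exists_fixedDim_zero_of_dim (hn2 : 2 ≤ n) : ∃ g : GL (Fin n) F, fixedDim g = 0 := by
  have hker0 : ∀ v : Fin n → F, (cyc n hn2 F).mulVec v = 0 → v = 0 := by
    intro v hv
    have h1 : ∀ j : Fin n, 1 ≤ (j : ℕ) → v j = 0 := by
      intro j hj
      have := congrFun hv ⟨(j : ℕ) - 1, by omega⟩
      rw [cyc_mulVec, dif_pos (show ((j : ℕ) - 1 : ℕ) + 1 < n by omega)] at this
      have he : (⟨((j : ℕ) - 1 : ℕ) + 1, by omega⟩ : Fin n) = j := by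
        apply Fin.ext; simp; omega
      rw [he] at this
      simpa using this
    funext j
    by_cases hj : 1 ≤ (j : ℕ)
    · exact h1 j hj
    · have hj0 : j = ⟨0, by omega⟩ := by apply Fin.ext; simp; omega
      have := congrFun hv ⟨n - 1, by omega⟩
      rw [cyc_mulVec, dif_neg (by simp; omega)] at this
      rw [h1 ⟨1, by omega⟩ (by simp)] at this
      simp only [Pi.zero_apply, add_zero] at this
      rw [hj0]; exact this
  have hu : IsUnit (cyc n hn2 F) := isUnit_of_mulVec_ker _ hker0
  refine ⟨hu.unit, ?_⟩
  have hcoe : ((hu.unit : GL (Fin n) F) : Matrix (Fin n) (Fin n) F) = cyc n hn2 F :=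
    hu.unit_spec
  rw [fixedDim, hcoe]
  have hker : LinearMap.ker (mulVecLin (cyc n hn2 F - 1)) = ⊥ := by
    rw [LinearMap.ker_eq_bot']
    intro v hv
    rw [mulVecLin_apply, Matrix.sub_mulVec, Matrix.one_mulVec, sub_eq_zero] at hv
    have key : ∀ k : ℕ, ∀ hk : k < n, v ⟨k, hk⟩ = v ⟨0, by omega⟩ := by
      intro k
      induction k with
      | zero => intro hk; rfl
      | succ k ih =>
        intro hk
        have := congrFun hv ⟨k, by omega⟩
        rw [cyc_mulVec, dif_pos (show (k : ℕ) + 1 < n from hk)] at this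
        rw [this]
        exact ih (by omega)
    have h0 : v ⟨0, by omega⟩ = 0 := by
      have := congrFun hv ⟨n - 1, by omega⟩
      rw [cyc_mulVec, dif_neg (by simp; omega)] at this
      rw [key 1 (by omega), key (n - 1) (by omega)] at this
      exact add_eq_left.mp this
    funext j
    have := key (j : ℕ) j.2
    rw [Fin.eta] at this
    rw [this, h0]
    simp
  rw [hker]
  simp

end Cyc

lemma exists_fixedDim {F : Type*} [Field F] [Fintype F] {n : ℕ} (hn : 1 ≤ n)
    (hnq : 2 ≤ n ∨ 3 ≤ Fintype.card F) (r : ℕ) (hr : r ≤ n) :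
    ∃ g : GL (Fin n) F, fixedDim g = r := by
  rcases Nat.eq_zero_or_pos r with h0 | hpos
  · subst h0
    rcases hnq with h | h
    · exact exists_fixedDim_zero_of_dim h
    · exact exists_fixedDim_zero_of_big h
  · exact exists_fixedDim_pos r hpos hr

/-- For `n ≥ 1` and (`n ≥ 2` or `q ≥ 3`), the `n + 1` Thoma characters
`σ_k(g) = q^(k * r(g))`, `0 ≤ k ≤ n`, are linearly independent over `ℂ`, and every
derangement function (a function depending on `g` only via `r(g)`) is a `ℂ`-linear
combination of them. -/
theorem thoma_characters_basis {F : Type*} [Field F] [Fintype F]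
    (q n : ℕ) (hq : Fintype.card F = q) (hn : 1 ≤ n) (hnq : 2 ≤ n ∨ 3 ≤ q) :
    LinearIndependent ℂ
      (fun (k : Fin (n + 1)) (g : GL (Fin n) F) => (q : ℂ) ^ ((k : ℕ) * fixedDim g)) ∧
    ∀ f : GL (Fin n) F → ℂ,
      (∀ g h : GL (Fin n) F, fixedDim g = fixedDim h → f g = f h) →
      f ∈ Submodule.span ℂ
        (Set.range fun (k : Fin (n + 1)) (g : GL (Fin n) F) =>
          (q : ℂ) ^ ((k : ℕ) * fixedDim g)) := by
  have hq2 : 2 ≤ q := hq ▸ Fintype.one_lt_card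
  have hsur : ∀ r : Fin (n + 1), ∃ g : GL (Fin n) F, fixedDim g = (r : ℕ) := fun r =>
    exists_fixedDim hn (hnq.imp id (fun h3 => by rw [hq]; exact h3)) (r : ℕ)
      (Nat.lt_succ_iff.mp r.2)
  choose σ hσ using hsur
  let ρ : GL (Fin n) F → Fin (n + 1) := fun g =>
    ⟨fixedDim g, Nat.lt_succ_of_le (fixedDim_upper g)⟩
  have hρ_surj : Function.Surjective ρ := fun r => ⟨σ r, Fin.ext (by simpa [ρ] using hσ r)⟩
  let Φ : (Fin (n + 1) → ℂ) →ₗ[ℂ] (GL (Fin n) F → ℂ) := LinearMap.funLeft ℂ ℂ ρ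
  have hΦinj : Function.Injective Φ :=
    LinearMap.funLeft_injective_of_surjective ℂ ℂ ρ hρ_surj
  let v : Fin (n + 1) → (Fin (n + 1) → ℂ) := fun k r => (q : ℂ) ^ ((k : ℕ) * (r : ℕ))
  have hvli : LinearIndependent ℂ v := by
    have hv : v = fun k => (Matrix.vandermonde fun j : Fin (n + 1) => ((q : ℂ) ^ (j : ℕ))) k := by
      funext k r
      simp [v, Matrix.vandermonde, pow_mul]
    rw [hv]
    change LinearIndependent ℂ (Matrix.vandermonde fun j : Fin (n + 1) => ((q : ℂ) ^ (j : ℕ))).row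
    rw [Matrix.linearIndependent_rows_iff_isUnit, Matrix.isUnit_iff_isUnit_det]
    refine (Matrix.det_vandermonde_ne_zero_iff.mpr ?_).isUnit
    intro i j hij
    have hij' : ((q : ℂ)) ^ (i : ℕ) = ((q : ℂ)) ^ (j : ℕ) := by simpa using hij
    have hcast : (q : ℕ) ^ (i : ℕ) = q ^ (j : ℕ) := by exact_mod_cast hij'
    exact Fin.ext (Nat.pow_right_injective hq2 hcast)
  have hfam : (fun (k : Fin (n + 1)) (g : GL (Fin n) F) =>
      (q : ℂ) ^ ((k : ℕ) * fixedDim g)) = fun k => Φ (v k) := rfl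
  constructor
  · rw [hfam]
    exact hvli.map' Φ (LinearMap.ker_eq_bot.mpr hΦinj)
  · intro f hf
    have hspan : Submodule.span ℂ (Set.range v) = ⊤ :=
      hvli.span_eq_top_of_card_eq_finrank (by simp)
    have hc : (fun r => f (σ r)) ∈ Submodule.span ℂ (Set.range v) := by
      rw [hspan]; trivial
    have hfΦ : f = Φ (fun r => f (σ r)) := by
      funext g
      show f g = f (σ (ρ g))
      exact hf g (σ (ρ g)) (hσ (ρ g)).symm
    rw [hfam, hfΦ]
    have hmem := Submodule.mem_map_of_mem (f := Φ) hc
    rw [Submodule.map_span, ← Set.range_comp] at hmem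
    exact hmem
end

section
/- Let F be a finite field with q elements, let 1 ≤ k ≤ n, and let g be an invertible (n−1)×(n−1) matrix over F. Write g⊕1 for the block-diagonal invertible n×n matrix with blocks g and the 1×1 identity. For a d×m size, let N(d,m,h) denote the number of d×m matrices over F of rank m fixed by h (with N(d,0,h) = 1). Then N(n, k, g⊕1) = q^k · N(n−1, k, g) + (q^{2k−1} − q^{k−1}) · N(n−1, k−1, g). (For k = n the first term vanishes since N(n−1, n, g) = 0.) -/
open Matrix Module LinearMap

set_option linter.unusedSectionVars false
set_option maxHeartbeats 1000000

namespace BranchingAux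

variable {F : Type*} [Field F] [Fintype F] [DecidableEq F] {m k : ℕ}

lemma rank_nullity {ι : Type*} [Fintype ι] {r : ℕ} (A : Matrix ι (Fin r) F) :
    A.rank + finrank F (LinearMap.ker A.mulVecLin) = r := by
  have h := LinearMap.finrank_range_add_finrank_ker A.mulVecLin
  rwa [Module.finrank_fin_fun] at h

lemma rank_eq_iff_ker {ι : Type*} [Fintype ι] {r : ℕ} (A : Matrix ι (Fin r) F) :
    A.rank = r ↔ LinearMap.ker A.mulVecLin = ⊥ := by
  have h := rank_nullity A
  constructor
  · intro hr
    have h0 : finrank F (LinearMap.ker A.mulVecLin) = 0 := by omega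
    rwa [Submodule.finrank_eq_zero] at h0
  · intro hker
    rw [hker, finrank_bot] at h
    omega

lemma rank_eq_sub_iff_ker {ι : Type*} [Fintype ι] {r : ℕ} (hr : 1 ≤ r)
    (A : Matrix ι (Fin r) F) :
    A.rank = r - 1 ↔ finrank F (LinearMap.ker A.mulVecLin) = 1 := by
  have h := rank_nullity A
  constructor <;> intro h1 <;> omega

def dotL {k : ℕ} (a : Fin k → F) : (Fin k → F) →ₗ[F] F where
  toFun w := a ⬝ᵥ w
  map_add' x y := dotProduct_add a x y
  map_smul' c x := dotProduct_smul c a x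

@[simp] lemma dotL_apply {k : ℕ} (a w : Fin k → F) : dotL a w = a ⬝ᵥ w := rfl

def Cond {k : ℕ} (u : Matrix (Fin m) (Fin k) F) (v : Fin k → F) : Prop :=
  ∀ w : Fin k → F, u.mulVec w = 0 → v ⬝ᵥ w = 0 → w = 0

lemma count_cond_of_ker_bot {k : ℕ} (u : Matrix (Fin m) (Fin k) F)
    (h : LinearMap.ker u.mulVecLin = ⊥) :
    Nat.card {v : Fin k → F // Cond u v} = Fintype.card F ^ k := by
  classical
  have hall : ∀ v : Fin k → F, Cond u v := by
    intro v w hw _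
    have : w ∈ LinearMap.ker u.mulVecLin := by simpa [LinearMap.mem_ker] using hw
    simpa [h] using this
  rw [Nat.card_congr (Equiv.subtypeUnivEquiv hall), Nat.card_eq_fintype_card,
    Fintype.card_fun, Fintype.card_fin]

lemma count_cond_of_one {k : ℕ} (hk : 1 ≤ k) (u : Matrix (Fin m) (Fin k) F)
    (h : finrank F (LinearMap.ker u.mulVecLin) = 1) :
    Nat.card {v : Fin k → F // Cond u v} = Fintype.card F ^ k - Fintype.card F ^ (k - 1) := by
  classical
  -- obtain a spanning vector of the kernel
  have hne : LinearMap.ker u.mulVecLin ≠ ⊥ := by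
    intro hb
    rw [hb, finrank_bot] at h; omega
  obtain ⟨w0, hw0mem, hw0ne⟩ := (Submodule.ne_bot_iff _).1 hne
  have hsp : Submodule.span F {w0} = LinearMap.ker u.mulVecLin := by
    apply Submodule.eq_of_le_of_finrank_le
    · rwa [Submodule.span_singleton_le_iff_mem]
    · rw [h, finrank_span_singleton hw0ne]
  -- the condition is a dot-product condition
  have hcond : ∀ v : Fin k → F, Cond u v ↔ v ⬝ᵥ w0 ≠ 0 := by
    intro v
    constructor
    · intro hc h0
      exact hw0ne (hc w0 (by simpa [LinearMap.mem_ker] using hw0mem) h0)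
    · intro h0 w hw hv
      have : w ∈ Submodule.span F {w0} := by
        rw [hsp]; simpa [LinearMap.mem_ker] using hw
      obtain ⟨c, rfl⟩ := Submodule.mem_span_singleton.1 this
      have : c * (v ⬝ᵥ w0) = 0 := by simpa [dotProduct_smul] using hv
      rcases mul_eq_zero.1 this with hc | hc
      · simp [hc]
      · exact absurd hc h0
  -- count
  rw [Nat.card_congr (Equiv.subtypeEquivRight hcond), Nat.card_eq_fintype_card]
  have : ∀ v : Fin k → F, (v ⬝ᵥ w0 ≠ 0) = ¬ (dotL w0 v = 0) := by
    intro v; rw [eq_iff_iff]; simp [dotProduct_comm]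
  simp_rw [this]
  rw [Fintype.card_subtype_compl, Fintype.card_fun, Fintype.card_fin]
  congr 1
  -- card of the kernel of the functional
  have e1 : {v : Fin k → F // dotL w0 v = 0} ≃ LinearMap.ker (dotL (k := k) w0) :=
    Equiv.subtypeEquivRight fun v => (LinearMap.mem_ker).symm
  rw [Fintype.card_congr e1]
  have hsur : LinearMap.range (dotL (k := k) w0) = ⊤ := by
    rw [LinearMap.range_eq_top]
    intro c
    obtain ⟨j, hj⟩ := Function.ne_iff.1 hw0ne
    refine ⟨Pi.single j ((w0 j)⁻¹ * c), ?_⟩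
    have hj' : w0 j ≠ 0 := by simpa using hj
    simp only [dotL_apply, dotProduct_single]
    rw [← mul_assoc, mul_inv_cancel₀ hj', one_mul]
  have hrn := LinearMap.finrank_range_add_finrank_ker (dotL (k := k) w0)
  rw [Module.finrank_fin_fun, hsur, finrank_top, finrank_self] at hrn
  rw [card_eq_pow_finrank (K := F)]
  congr 1
  omega

lemma count_cond_of_big {k : ℕ} (u : Matrix (Fin m) (Fin k) F)
    (h1 : LinearMap.ker u.mulVecLin ≠ ⊥) (h2 : finrank F (LinearMap.ker u.mulVecLin) ≠ 1) :
    Nat.card {v : Fin k → F // Cond u v} = 0 := by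
  classical
  rw [Nat.card_eq_zero]
  left
  rw [isEmpty_subtype]
  intro v hv
  set K := LinearMap.ker u.mulVecLin with hK
  have hinj : Function.Injective ((dotL v).comp K.subtype) := by
    rw [← LinearMap.ker_eq_bot, LinearMap.ker_eq_bot']
    intro x hx
    have hm : u.mulVec x.1 = 0 := x.2
    have hd : v ⬝ᵥ (x : Fin k → F) = 0 := by simpa using hx
    exact Subtype.ext (hv x.1 hm hd)
  have hle := LinearMap.finrank_le_finrank_of_injective hinj
  rw [finrank_self] at hle
  have h0 : finrank F K = 0 := by omega
  rw [Submodule.finrank_eq_zero] at h0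
  exact h1 h0



def colDrop (i : Fin (k + 1)) (u : Matrix (Fin m) (Fin (k + 1)) F) : Matrix (Fin m) (Fin k) F :=
  u.submatrix _root_.id i.succAbove

def colIns (i : Fin (k + 1)) (u' : Matrix (Fin m) (Fin k) F) : Matrix (Fin m) (Fin (k + 1)) F :=
  Matrix.of fun r => i.insertNth 0 (u' r)

lemma mulVec_single_eq_col {n : ℕ} (u : Matrix (Fin m) (Fin n) F) (i : Fin n) (r : Fin m) :
    u.mulVec (Pi.single i 1) r = u r i := by
  simp [Matrix.mulVec, dotProduct, Pi.single_apply, mul_ite, Finset.sum_ite_eq']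

lemma colIns_apply_same (i : Fin (k + 1)) (u' : Matrix (Fin m) (Fin k) F) (r : Fin m) :
    colIns i u' r i = 0 := by
  simp [colIns, Fin.insertNth_apply_same]

lemma colIns_apply_succAbove (i : Fin (k + 1)) (u' : Matrix (Fin m) (Fin k) F) (r : Fin m)
    (j : Fin k) : colIns i u' r (i.succAbove j) = u' r j := by
  simp [colIns, Fin.insertNth_apply_succAbove]

lemma mulVec_colIns (i : Fin (k + 1)) (u' : Matrix (Fin m) (Fin k) F) (w : Fin (k + 1) → F) :
    (colIns i u').mulVec w = u'.mulVec (i.removeNth w) := by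
  funext r
  simp only [Matrix.mulVec, dotProduct]
  rw [Fin.sum_univ_succAbove _ i]
  simp [colIns_apply_same, colIns_apply_succAbove, Fin.removeNth]

lemma mulVec_insertNth (i : Fin (k + 1)) (u : Matrix (Fin m) (Fin (k + 1)) F)
    (w' : Fin k → F) :
    u.mulVec (i.insertNth 0 w') = (colDrop i u).mulVec w' := by
  funext r
  simp only [Matrix.mulVec, dotProduct]
  rw [Fin.sum_univ_succAbove _ i]
  simp [colDrop, Fin.insertNth_apply_same, Fin.insertNth_apply_succAbove]

lemma colDrop_colIns (i : Fin (k + 1)) (u' : Matrix (Fin m) (Fin k) F) :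
    colDrop i (colIns i u') = u' := by
  ext r j
  simp [colDrop, colIns, Fin.insertNth_apply_succAbove]

lemma colIns_colDrop (i : Fin (k + 1)) (u : Matrix (Fin m) (Fin (k + 1)) F)
    (h : u.mulVec (Pi.single i 1) = 0) :
    colIns i (colDrop i u) = u := by
  have hcol : ∀ r, u r i = 0 := by
    intro r
    have := congrFun h r
    rwa [mulVec_single_eq_col] at this
  funext r
  have h2 := Fin.insertNth_self_removeNth i (u r)
  rw [hcol r] at h2
  exact h2

lemma colDrop_mul (G : Matrix (Fin m) (Fin m) F) (i : Fin (k + 1))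
    (u : Matrix (Fin m) (Fin (k + 1)) F) :
    colDrop i (G * u) = G * colDrop i u := by
  ext r j
  simp [colDrop, Matrix.mul_apply]

lemma mul_colIns (G : Matrix (Fin m) (Fin m) F) (i : Fin (k + 1))
    (u' : Matrix (Fin m) (Fin k) F) :
    G * colIns i u' = colIns i (G * u') := by
  ext r c
  rcases eq_or_ne c i with rfl | hc
  · simp [Matrix.mul_apply, colIns_apply_same]
  · obtain ⟨j, rfl⟩ := Fin.exists_succAbove_eq hc
    simp [Matrix.mul_apply, colIns_apply_succAbove]

lemma single_ne_zero' (i : Fin (k + 1)) : (Pi.single i 1 : Fin (k + 1) → F) ≠ 0 := by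
  intro h
  have := congrFun h i
  simp at this

lemma removeNth_eq_zero_iff (i : Fin (k + 1)) (w : Fin (k + 1) → F) :
    i.removeNth w = 0 ↔ w ∈ Submodule.span F {(Pi.single i 1 : Fin (k + 1) → F)} := by
  rw [Submodule.mem_span_singleton]
  constructor
  · intro h
    refine ⟨w i, ?_⟩
    funext c
    rcases eq_or_ne c i with rfl | hc
    · simp
    · obtain ⟨j, rfl⟩ := Fin.exists_succAbove_eq hc
      have := congrFun h j
      simp only [Fin.removeNth] at this
      simp [this, Pi.single_apply, Fin.succAbove_ne]
  · rintro ⟨c, rfl⟩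
    funext j
    simp [Fin.removeNth, Pi.single_apply, Fin.succAbove_ne]

lemma ker_colIns (i : Fin (k + 1)) (u' : Matrix (Fin m) (Fin k) F)
    (h : LinearMap.ker u'.mulVecLin = ⊥) :
    finrank F (LinearMap.ker (colIns i u').mulVecLin) = 1 := by
  have hker : LinearMap.ker (colIns i u').mulVecLin
      = Submodule.span F {(Pi.single i 1 : Fin (k + 1) → F)} := by
    ext w
    rw [LinearMap.mem_ker, ← removeNth_eq_zero_iff]
    constructor
    · intro hw
      have : u'.mulVec (i.removeNth w) = 0 := by
        rw [← mulVec_colIns]; simpa using hw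
      have hm : i.removeNth w ∈ LinearMap.ker u'.mulVecLin := by simpa using this
      rw [h] at hm; simpa using hm
    · intro hw
      show (colIns i u').mulVec w = 0
      rw [mulVec_colIns, hw]
      simp
  rw [hker, finrank_span_singleton (single_ne_zero' i)]

lemma ker_colDrop (i : Fin (k + 1)) (u : Matrix (Fin m) (Fin (k + 1)) F)
    (h0 : u.mulVec (Pi.single i 1) = 0)
    (h1 : finrank F (LinearMap.ker u.mulVecLin) = 1) :
    LinearMap.ker (colDrop i u).mulVecLin = ⊥ := by
  have hmem : (Pi.single i 1 : Fin (k + 1) → F) ∈ LinearMap.ker u.mulVecLin := by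
    simpa using h0
  have hsp : Submodule.span F {(Pi.single i 1 : Fin (k + 1) → F)} = LinearMap.ker u.mulVecLin := by
    apply Submodule.eq_of_le_of_finrank_le
    · rwa [Submodule.span_singleton_le_iff_mem]
    · rw [h1, finrank_span_singleton (single_ne_zero' i)]
  rw [LinearMap.ker_eq_bot']
  intro w' hw'
  have : u.mulVec (i.insertNth 0 w') = 0 := by
    rw [mulVec_insertNth]; simpa using hw'
  have hm : i.insertNth 0 w' ∈ LinearMap.ker u.mulVecLin := by simpa using this
  rw [← hsp, ← removeNth_eq_zero_iff] at hm
  rw [Fin.removeNth_insertNth] at hm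
  exact hm

/-- the fiber over the standard basis vector -/
def fiberEquiv (G : Matrix (Fin m) (Fin m) F) (i : Fin (k + 1)) :
    {u : Matrix (Fin m) (Fin (k + 1)) F //
        G * u = u ∧ finrank F (LinearMap.ker u.mulVecLin) = 1 ∧ u.mulVec (Pi.single i 1) = 0}
    ≃ {u' : Matrix (Fin m) (Fin k) F // G * u' = u' ∧ LinearMap.ker u'.mulVecLin = ⊥} where
  toFun u := ⟨colDrop i u.1, by rw [← colDrop_mul, u.2.1],
    ker_colDrop i u.1 u.2.2.2 u.2.2.1⟩
  invFun u' := ⟨colIns i u'.1, by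
    refine ⟨by rw [mul_colIns, u'.2.1], ker_colIns i u'.1 u'.2.2, ?_⟩
    funext r
    rw [mulVec_single_eq_col, colIns_apply_same]; simp⟩
  left_inv u := Subtype.ext (colIns_colDrop i u.1 u.2.2.2)
  right_inv u' := Subtype.ext (colDrop_colIns i u'.1)

lemma card_subtype_ne' {α : Type*} [Fintype α] [DecidableEq α] (a : α) :
    Fintype.card {x : α // x ≠ a} = Fintype.card α - 1 := by
  classical
  have : Fintype.card {x : α // ¬ x = a} = Fintype.card α - Fintype.card {x : α // x = a} :=
    Fintype.card_subtype_compl _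
  rw [Fintype.card_subtype_eq] at this
  exact this

lemma exists_equiv_single {k : ℕ} (w : Fin k → F) (hw : w ≠ 0) :
    ∃ (σ : (Fin k → F) ≃ₗ[F] (Fin k → F)) (i : Fin k), σ (Pi.single i 1) = w := by
  classical
  have hs : LinearIndepOn F id ({w} : Set (Fin k → F)) :=
    (linearIndepOn_singleton_iff F).2 hw
  let b := Module.Basis.extend hs
  haveI : Fintype (hs.extend (Set.subset_univ _)) := FiniteDimensional.fintypeBasisIndex b
  have hcard : Fintype.card (hs.extend (Set.subset_univ _)) = k := by
    have := Module.finrank_eq_card_basis b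
    rwa [Module.finrank_fin_fun, eq_comm] at this
  let e := Fintype.equivFinOfCardEq hcard
  have hwmem : w ∈ hs.extend (Set.subset_univ _) :=
    hs.subset_extend (Set.subset_univ _) (Set.mem_singleton w)
  refine ⟨(Pi.basisFun F (Fin k)).equiv (b.reindex e) (Equiv.refl _), e ⟨w, hwmem⟩, ?_⟩
  have h1 : (Pi.basisFun F (Fin k)) (e ⟨w, hwmem⟩) = Pi.single (e ⟨w, hwmem⟩) 1 := by
    simp [Pi.basisFun_apply]
  rw [← h1, Basis.equiv_apply, Module.Basis.reindex_apply, Equiv.refl_apply, Equiv.symm_apply_apply]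
  exact Basis.extend_apply_self hs ⟨w, hwmem⟩

lemma card_fiber (G : Matrix (Fin m) (Fin m) F) (w : Fin (k + 1) → F) (hw : w ≠ 0) :
    Nat.card {u : Matrix (Fin m) (Fin (k + 1)) F //
        G * u = u ∧ finrank F (LinearMap.ker u.mulVecLin) = 1 ∧ u.mulVec w = 0}
      = Nat.card {u' : Matrix (Fin m) (Fin k) F //
          G * u' = u' ∧ LinearMap.ker u'.mulVecLin = ⊥} := by
  classical
  obtain ⟨σ, i, hσ⟩ := exists_equiv_single w hw
  set P := LinearMap.toMatrix' (σ : (Fin (k+1) → F) →ₗ[F] (Fin (k+1) → F)) with hP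
  set Q := LinearMap.toMatrix' (σ.symm : (Fin (k+1) → F) →ₗ[F] (Fin (k+1) → F)) with hQ
  have hPQ : P * Q = 1 := by
    rw [hP, hQ, ← LinearMap.toMatrix'_comp]
    have : (σ : (Fin (k+1) → F) →ₗ[F] (Fin (k+1) → F)) ∘ₗ (σ.symm :
        (Fin (k+1) → F) →ₗ[F] (Fin (k+1) → F)) = LinearMap.id := by
      ext v; simp
    rw [this, LinearMap.toMatrix'_id]
  have hQP : Q * P = 1 := by
    rw [hP, hQ, ← LinearMap.toMatrix'_comp]
    have : (σ.symm : (Fin (k+1) → F) →ₗ[F] (Fin (k+1) → F)) ∘ₗ (σ :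
        (Fin (k+1) → F) →ₗ[F] (Fin (k+1) → F)) = LinearMap.id := by
      ext v; simp
    rw [this, LinearMap.toMatrix'_id]
  have hPlin : P.mulVecLin = (σ : (Fin (k+1) → F) →ₗ[F] (Fin (k+1) → F)) := by
    rw [hP, ← Matrix.toLin'_apply', Matrix.toLin'_toMatrix']
  -- the equivalence u ↦ u * P
  have hmain : ∀ u : Matrix (Fin m) (Fin (k + 1)) F,
      (G * u = u ∧ finrank F (LinearMap.ker u.mulVecLin) = 1 ∧ u.mulVec w = 0)
      ↔ (G * (u * P) = u * P ∧ finrank F (LinearMap.ker (u * P).mulVecLin) = 1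
          ∧ (u * P).mulVec (Pi.single i 1) = 0) := by
    intro u
    have h2 : finrank F (LinearMap.ker (u * P).mulVecLin)
        = finrank F (LinearMap.ker u.mulVecLin) := by
      rw [Matrix.mulVecLin_mul, hPlin, LinearMap.ker_comp]
      exact LinearEquiv.finrank_eq (LinearEquiv.ofSubmodule' σ _)
    have h3 : (u * P).mulVec (Pi.single i 1) = u.mulVec w := by
      rw [← Matrix.mulVec_mulVec]
      congr 1
      have h5 : P.mulVec (Pi.single i 1) = σ (Pi.single i 1) := by
        have h4 := LinearMap.congr_fun hPlin (Pi.single i 1)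
        simpa using h4
      rw [h5, hσ]
    constructor
    · rintro ⟨hf, h1, h0⟩
      exact ⟨by rw [← Matrix.mul_assoc, hf], by rw [h2]; exact h1, by rw [h3]; exact h0⟩
    · rintro ⟨hf, h1, h0⟩
      refine ⟨?_, by rw [← h2]; exact h1, by rw [← h3]; exact h0⟩
      have := congrArg (· * Q) hf
      simpa [Matrix.mul_assoc, hPQ] using this
  have e1 : {u : Matrix (Fin m) (Fin (k + 1)) F //
      G * u = u ∧ finrank F (LinearMap.ker u.mulVecLin) = 1 ∧ u.mulVec w = 0}
      ≃ {u : Matrix (Fin m) (Fin (k + 1)) F //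
      G * u = u ∧ finrank F (LinearMap.ker u.mulVecLin) = 1
        ∧ u.mulVec (Pi.single i 1) = 0} := by
    refine Equiv.subtypeEquiv ⟨fun u => u * P, fun u => u * Q, fun u => ?_, fun u => ?_⟩
      fun u => hmain u
    · simp [Matrix.mul_assoc, hPQ]
    · simp [Matrix.mul_assoc, hQP]
  rw [Nat.card_congr e1, Nat.card_congr (fiberEquiv G i)]

lemma key_count (G : Matrix (Fin m) (Fin m) F) (k : ℕ) :
    (Fintype.card F - 1) * Nat.card {u : Matrix (Fin m) (Fin (k + 1)) F //
        G * u = u ∧ finrank F (LinearMap.ker u.mulVecLin) = 1}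
      = (Fintype.card F ^ (k + 1) - 1) * Nat.card {u' : Matrix (Fin m) (Fin k) F //
          G * u' = u' ∧ LinearMap.ker u'.mulVecLin = ⊥} := by
  classical
  set T := {p : Matrix (Fin m) (Fin (k + 1)) F × (Fin (k + 1) → F) //
    (G * p.1 = p.1 ∧ finrank F (LinearMap.ker p.1.mulVecLin) = 1)
      ∧ (p.1.mulVec p.2 = 0 ∧ p.2 ≠ 0)} with hT
  -- first count: fiber over u
  have e1 : T ≃ Σ u : {u : Matrix (Fin m) (Fin (k + 1)) F //
      G * u = u ∧ finrank F (LinearMap.ker u.mulVecLin) = 1},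
      {w : Fin (k + 1) → F // u.1.mulVec w = 0 ∧ w ≠ 0} :=
    { toFun := fun p => ⟨⟨p.1.1, p.2.1⟩, ⟨p.1.2, p.2.2⟩⟩
      invFun := fun p => ⟨⟨p.1.1, p.2.1⟩, ⟨p.1.2, p.2.2⟩⟩
      left_inv := fun p => rfl
      right_inv := fun p => rfl }
  have e2 : T ≃ Σ w : {w : Fin (k + 1) → F // w ≠ 0},
      {u : Matrix (Fin m) (Fin (k + 1)) F //
        G * u = u ∧ finrank F (LinearMap.ker u.mulVecLin) = 1 ∧ u.mulVec w.1 = 0} :=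
    { toFun := fun p => ⟨⟨p.1.2, p.2.2.2⟩, ⟨p.1.1, p.2.1.1, p.2.1.2, p.2.2.1⟩⟩
      invFun := fun p => ⟨⟨p.2.1, p.1.1⟩, ⟨⟨p.2.2.1, p.2.2.2.1⟩, ⟨p.2.2.2.2, p.1.2⟩⟩⟩
      left_inv := fun p => rfl
      right_inv := fun p => rfl }
  -- per-u fiber count
  have hu : ∀ u : {u : Matrix (Fin m) (Fin (k + 1)) F //
      G * u = u ∧ finrank F (LinearMap.ker u.mulVecLin) = 1},
      Nat.card {w : Fin (k + 1) → F // u.1.mulVec w = 0 ∧ w ≠ 0} = Fintype.card F - 1 := by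
    rintro ⟨u, hf, h1⟩
    have eK : {w : Fin (k + 1) → F // u.mulVec w = 0 ∧ w ≠ 0}
        ≃ {x : LinearMap.ker u.mulVecLin // x ≠ 0} :=
      { toFun := fun w => ⟨⟨w.1, w.2.1⟩, by
          intro hx
          exact w.2.2 (by simpa using congrArg Subtype.val hx)⟩
        invFun := fun x => ⟨x.1.1, x.1.2, by
          intro hx
          exact x.2 (Subtype.ext (by simpa using hx))⟩
        left_inv := fun w => rfl
        right_inv := fun x => rfl }
    rw [Nat.card_congr eK, Nat.card_eq_fintype_card, card_subtype_ne',
      card_eq_pow_finrank (K := F) (V := LinearMap.ker u.mulVecLin), h1, pow_one]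
  have hw : ∀ w : {w : Fin (k + 1) → F // w ≠ 0},
      Nat.card {u : Matrix (Fin m) (Fin (k + 1)) F //
        G * u = u ∧ finrank F (LinearMap.ker u.mulVecLin) = 1 ∧ u.mulVec w.1 = 0}
      = Nat.card {u' : Matrix (Fin m) (Fin k) F //
          G * u' = u' ∧ LinearMap.ker u'.mulVecLin = ⊥} := fun w => card_fiber G w.1 w.2
  have hc1 : Nat.card T = Nat.card {u : Matrix (Fin m) (Fin (k + 1)) F //
      G * u = u ∧ finrank F (LinearMap.ker u.mulVecLin) = 1} * (Fintype.card F - 1) := by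
    rw [Nat.card_congr e1, Nat.card_eq_fintype_card, Fintype.card_sigma]
    have h6 : ∀ u : {u : Matrix (Fin m) (Fin (k + 1)) F //
        G * u = u ∧ finrank F (LinearMap.ker u.mulVecLin) = 1},
        Fintype.card {w : Fin (k + 1) → F // u.1.mulVec w = 0 ∧ w ≠ 0}
          = Fintype.card F - 1 := fun u => by rw [← Nat.card_eq_fintype_card]; exact hu u
    rw [Finset.sum_congr rfl (fun u _ => h6 u), Finset.sum_const, Finset.card_univ,
      smul_eq_mul, Nat.card_eq_fintype_card]
  have hc2 : Nat.card T = (Fintype.card F ^ (k + 1) - 1)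
      * Nat.card {u' : Matrix (Fin m) (Fin k) F //
          G * u' = u' ∧ LinearMap.ker u'.mulVecLin = ⊥} := by
    rw [Nat.card_congr e2, Nat.card_eq_fintype_card, Fintype.card_sigma]
    have h7 : ∀ w : {w : Fin (k + 1) → F // w ≠ 0},
        Fintype.card {u : Matrix (Fin m) (Fin (k + 1)) F //
          G * u = u ∧ finrank F (LinearMap.ker u.mulVecLin) = 1 ∧ u.mulVec w.1 = 0}
        = Nat.card {u' : Matrix (Fin m) (Fin k) F //
          G * u' = u' ∧ LinearMap.ker u'.mulVecLin = ⊥} := fun w => by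
      rw [← Nat.card_eq_fintype_card]; exact hw w
    rw [Finset.sum_congr rfl (fun w _ => h7 w), Finset.sum_const, Finset.card_univ,
      smul_eq_mul, card_subtype_ne', Fintype.card_fun, Fintype.card_fin]
  rw [← hc2, hc1, Nat.mul_comm]


def top {n : ℕ} (x : Matrix (Fin m ⊕ Unit) (Fin n) F) : Matrix (Fin m) (Fin n) F :=
  Matrix.of fun i j => x (Sum.inl i) j

def bot {n : ℕ} (x : Matrix (Fin m ⊕ Unit) (Fin n) F) : Fin n → F :=
  fun j => x (Sum.inr ()) j

def glue {n : ℕ} (u : Matrix (Fin m) (Fin n) F) (v : Fin n → F) :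
    Matrix (Fin m ⊕ Unit) (Fin n) F :=
  Matrix.of fun r j => Sum.elim (fun i => u i j) (fun _ => v j) r

lemma fix_iff {n : ℕ} (G : Matrix (Fin m) (Fin m) F) (x : Matrix (Fin m ⊕ Unit) (Fin n) F) :
    (Matrix.fromBlocks G 0 0 (1 : Matrix Unit Unit F) * x = x) ↔ G * top x = top x := by
  constructor
  · intro h
    ext i j
    have h1 := congrFun (congrFun h (Sum.inl i)) j
    simp only [Matrix.mul_apply, Fintype.sum_sum_type, Matrix.fromBlocks_apply₁₁,
      Matrix.fromBlocks_apply₁₂, Matrix.zero_apply, zero_mul, Finset.sum_const_zero,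
      add_zero] at h1
    simpa [top, Matrix.mul_apply] using h1
  · intro h
    ext r j
    cases r with
    | inl i =>
      have h1 := congrFun (congrFun h i) j
      simp only [top, Matrix.mul_apply, Matrix.of_apply] at h1
      simp only [Matrix.mul_apply, Fintype.sum_sum_type, Matrix.fromBlocks_apply₁₁,
        Matrix.fromBlocks_apply₁₂, Matrix.zero_apply, zero_mul, Finset.sum_const_zero,
        add_zero]
      exact h1
    | inr s =>
      cases s
      simp [Matrix.mul_apply, Fintype.sum_sum_type, Matrix.fromBlocks_apply₂₁,
        Matrix.fromBlocks_apply₂₂, Matrix.one_apply]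

lemma mulVec_top {n : ℕ} (x : Matrix (Fin m ⊕ Unit) (Fin n) F) (w : Fin n → F) :
    x.mulVec w = 0 ↔ (top x).mulVec w = 0 ∧ bot x ⬝ᵥ w = 0 := by
  constructor
  · intro h
    constructor
    · funext i; exact congrFun h (Sum.inl i)
    · exact congrFun h (Sum.inr ())
  · intro ⟨h1, h2⟩
    funext r
    cases r with
    | inl i => exact congrFun h1 i
    | inr s => cases s; exact h2

lemma rank_iff {n : ℕ} (x : Matrix (Fin m ⊕ Unit) (Fin n) F) :
    x.rank = n ↔ Cond (top x) (bot x) := by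
  rw [rank_eq_iff_ker, LinearMap.ker_eq_bot']
  constructor
  · intro h w htop hbot
    exact h w ((mulVec_top x w).2 ⟨htop, hbot⟩)
  · intro h w hw
    have := (mulVec_top x w).1 (by simpa using hw)
    exact h w this.1 this.2

def splitEquiv {n : ℕ} (G : Matrix (Fin m) (Fin m) F) :
    {x : Matrix (Fin m ⊕ Unit) (Fin n) F //
        Matrix.fromBlocks G 0 0 (1 : Matrix Unit Unit F) * x = x ∧ x.rank = n}
    ≃ Σ u : {u : Matrix (Fin m) (Fin n) F // G * u = u}, {v : Fin n → F // Cond u.1 v} where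
  toFun x := ⟨⟨top x.1, (fix_iff G x.1).1 x.2.1⟩, ⟨bot x.1, (rank_iff x.1).1 x.2.2⟩⟩
  invFun p := ⟨glue p.1.1 p.2.1,
    (fix_iff G _).2 p.1.2, (rank_iff _).2 p.2.2⟩
  left_inv x := by
    apply Subtype.ext
    funext r j
    cases r with
    | inl i => rfl
    | inr s => cases s; rfl
  right_inv p := rfl

lemma master (G : Matrix (Fin m) (Fin m) F) (k' : ℕ) :
    Nat.card {x : Matrix (Fin m ⊕ Unit) (Fin (k' + 1)) F //
        Matrix.fromBlocks G 0 0 (1 : Matrix Unit Unit F) * x = x ∧ x.rank = k' + 1} =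
      Fintype.card F ^ (k' + 1) * Nat.card {x : Matrix (Fin m) (Fin (k' + 1)) F //
          G * x = x ∧ x.rank = k' + 1}
        + (Fintype.card F ^ (2 * (k' + 1) - 1) - Fintype.card F ^ k') *
          Nat.card {x : Matrix (Fin m) (Fin k') F // G * x = x ∧ x.rank = k'} := by
  classical
  set q := Fintype.card F with hq
  rw [Nat.card_congr (splitEquiv G), Nat.card_eq_fintype_card, Fintype.card_sigma]
  have hcount : ∀ u : {u : Matrix (Fin m) (Fin (k' + 1)) F // G * u = u},
      Fintype.card {v : Fin (k' + 1) → F // Cond u.1 v}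
      = (if LinearMap.ker u.1.mulVecLin = ⊥ then q ^ (k' + 1) else 0)
        + (if finrank F (LinearMap.ker u.1.mulVecLin) = 1 then q ^ (k' + 1) - q ^ k'
            else 0) := by
    intro u
    rw [← Nat.card_eq_fintype_card]
    by_cases hb : LinearMap.ker u.1.mulVecLin = ⊥
    · rw [if_pos hb, count_cond_of_ker_bot _ hb, if_neg (by rw [hb]; simp), add_zero]
    · by_cases h1 : finrank F (LinearMap.ker u.1.mulVecLin) = 1
      · rw [if_neg hb, if_pos h1, count_cond_of_one (Nat.le_add_left 1 k') _ h1, zero_add,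
          Nat.add_sub_cancel]
      · rw [if_neg hb, if_neg h1, count_cond_of_big _ hb h1, add_zero]
  rw [Finset.sum_congr rfl fun u _ => hcount u, Finset.sum_add_distrib,
    Finset.sum_ite, Finset.sum_const, Finset.sum_const_zero, add_zero, smul_eq_mul,
    Finset.sum_ite, Finset.sum_const, Finset.sum_const_zero, add_zero, smul_eq_mul,
    ← Fintype.card_subtype, ← Fintype.card_subtype]
  -- identify the three counts
  have hA0 : Fintype.card {u : {u : Matrix (Fin m) (Fin (k' + 1)) F // G * u = u} //
      LinearMap.ker u.1.mulVecLin = ⊥}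
      = Nat.card {x : Matrix (Fin m) (Fin (k' + 1)) F // G * x = x ∧ x.rank = k' + 1} := by
    rw [← Nat.card_eq_fintype_card]
    exact Nat.card_congr ((Equiv.subtypeSubtypeEquivSubtypeInter _ _).trans
      (Equiv.subtypeEquivRight fun u =>
        and_congr_right fun _ => (rank_eq_iff_ker u).symm))
  have hA1 : Fintype.card {u : {u : Matrix (Fin m) (Fin (k' + 1)) F // G * u = u} //
      finrank F (LinearMap.ker u.1.mulVecLin) = 1}
      = Nat.card {u : Matrix (Fin m) (Fin (k' + 1)) F //
          G * u = u ∧ finrank F (LinearMap.ker u.mulVecLin) = 1} := by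
    rw [← Nat.card_eq_fintype_card]
    exact Nat.card_congr (Equiv.subtypeSubtypeEquivSubtypeInter
      (fun u : Matrix (Fin m) (Fin (k' + 1)) F => G * u = u)
      (fun u => finrank F (LinearMap.ker u.mulVecLin) = 1))
  have hB : Nat.card {x : Matrix (Fin m) (Fin k') F // G * x = x ∧ x.rank = k'}
      = Nat.card {u' : Matrix (Fin m) (Fin k') F //
          G * u' = u' ∧ LinearMap.ker u'.mulVecLin = ⊥} :=
    Nat.card_congr (Equiv.subtypeEquivRight fun u =>
      and_congr_right fun _ => rank_eq_iff_ker u)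
  rw [hA0, hA1, hB]
  set n0 := Nat.card {x : Matrix (Fin m) (Fin (k' + 1)) F // G * x = x ∧ x.rank = k' + 1}
  set n1 := Nat.card {u : Matrix (Fin m) (Fin (k' + 1)) F //
      G * u = u ∧ finrank F (LinearMap.ker u.mulVecLin) = 1} with hn1
  set B := Nat.card {u' : Matrix (Fin m) (Fin k') F //
      G * u' = u' ∧ LinearMap.ker u'.mulVecLin = ⊥} with hBdef
  have hkey := key_count G k'
  rw [← hq, ← hn1, ← hBdef] at hkey
  have h2 : n1 * (q ^ (k' + 1) - q ^ k') = (q ^ (2 * (k' + 1) - 1) - q ^ k') * B := by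
    have e1 : q ^ (k' + 1) - q ^ k' = q ^ k' * (q - 1) := by
      rw [Nat.mul_sub, mul_one, ← pow_succ]
    have e2 : q ^ (2 * (k' + 1) - 1) - q ^ k' = q ^ k' * (q ^ (k' + 1) - 1) := by
      rw [Nat.mul_sub, mul_one, ← pow_add]
      congr 2
      omega
    rw [e1, e2]
    calc n1 * (q ^ k' * (q - 1)) = q ^ k' * ((q - 1) * n1) := by ring
    _ = q ^ k' * ((q ^ (k' + 1) - 1) * B) := by rw [hkey]
    _ = q ^ k' * (q ^ (k' + 1) - 1) * B := by ring
  rw [h2, mul_comm n0 (q ^ (k' + 1))]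

end BranchingAux

/-- Branching rule for counts of fixed full-rank matrices: for `g ∈ GL(n-1, F)` (here of
size `m = n - 1`, so `n = m + 1`) and `1 ≤ k ≤ n`, the number of `n × k` rank-`k` matrices
fixed by `g ⊕ 1` equals `q^k` times the number of `(n-1) × k` rank-`k` matrices fixed by `g`,
plus `(q^{2k-1} - q^{k-1})` times the number of `(n-1) × (k-1)` rank-`(k-1)` matrices fixed
by `g`. -/
theorem branching_fixed_full_rank_count {F : Type*} [Field F] [Fintype F] [DecidableEq F]
    (q m k : ℕ) (hq : Fintype.card F = q) (hk : 1 ≤ k) (hkm : k ≤ m + 1)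
    (g : GL (Fin m) F) :
    Fintype.card {x : Matrix (Fin m ⊕ Unit) (Fin k) F //
        Matrix.fromBlocks (g : Matrix (Fin m) (Fin m) F) 0 0 (1 : Matrix Unit Unit F) * x = x
          ∧ x.rank = k} =
      q ^ k * Fintype.card {x : Matrix (Fin m) (Fin k) F //
          (g : Matrix (Fin m) (Fin m) F) * x = x ∧ x.rank = k}
        + (q ^ (2 * k - 1) - q ^ (k - 1)) *
          Fintype.card {x : Matrix (Fin m) (Fin (k - 1)) F //
            (g : Matrix (Fin m) (Fin m) F) * x = x ∧ x.rank = k - 1} := by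
  classical
  obtain ⟨k', rfl⟩ : ∃ k', k = k' + 1 := ⟨k - 1, by omega⟩
  simp only [Nat.add_sub_cancel]
  rw [← Nat.card_eq_fintype_card, ← Nat.card_eq_fintype_card, ← Nat.card_eq_fintype_card,
    BranchingAux.master ((g : Matrix (Fin m) (Fin m) F)) k', hq]
  rfl
end

section
/- Let q > 1 be a real number, let n be a natural number, and let 0 ≤ r ≤ n be an integer. Then for every complex number z, z^{n−r} = Σ_{j=0}^{n} ( z^{n−j} · ∏_{i=0}^{j-1} (q^{−i} − z)/(q^{i+1} − 1) ) · ∏_{i=0}^{j-1} (q^{r} − q^{i}), where empty products equal 1 and real factors are regarded as complex numbers. -/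
/-!
Write `b r j = a_j · ψ_j(r)` for the coefficient `a_j = ∏_{i<j} (q^{-i} - z)/(q^{i+1} - 1)` times
the character value `ψ_j(r) = ∏_{i<j} (q^r - q^i)`. Peeling off the factors `i = j` gives the
recurrence `b (r+1) (j+1) = q^{j+1} b r (j+1) - (q^j z - 1) b r j`, under which the sum
`Σ_{j ≤ r} z^{r-j} b r j` is unchanged from `r` to `r + 1` up to a telescoping sum; hence it equals
its value `1` at `r = 0`. Multiplying by `z^{n-r}` gives the expansion, the terms with `j > r`
vanishing because `ψ_j(r)` then contains the factor `q^r - q^r`.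
-/

open Finset

variable {K : Type*} [Field K]

def thomaCoeff (q z : K) (j : ℕ) : K :=
  ∏ i ∈ range j, (q ^ (-(i : ℤ)) - z) / (q ^ (i + 1) - 1)

def derangementValue (q : K) (r j : ℕ) : K :=
  ∏ i ∈ range j, (q ^ r - q ^ i)

theorem thomaCoeff_zero (q z : K) : thomaCoeff q z 0 = 1 := prod_range_zero _

theorem thomaCoeff_succ (q z : K) (j : ℕ) :
    thomaCoeff q z (j + 1) = thomaCoeff q z j * ((q ^ (-(j : ℤ)) - z) / (q ^ (j + 1) - 1)) :=
  prod_range_succ _ _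

theorem derangementValue_zero (q : K) (r : ℕ) : derangementValue q r 0 = 1 := prod_range_zero _

theorem derangementValue_succ (q : K) (r j : ℕ) :
    derangementValue q r (j + 1) = derangementValue q r j * (q ^ r - q ^ j) :=
  prod_range_succ _ _

theorem derangementValue_eq_zero_of_lt (q : K) {r j : ℕ} (h : r < j) :
    derangementValue q r j = 0 :=
  prod_eq_zero (mem_range.mpr h) (sub_self _)

theorem derangementValue_succ_succ (q : K) (r j : ℕ) :
    derangementValue q (r + 1) (j + 1) = q ^ j * (q ^ (r + 1) - 1) * derangementValue q r j := by
  induction j with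
  | zero => simp [derangementValue_succ, derangementValue_zero]
  | succ j ih =>
    rw [derangementValue_succ, ih, derangementValue_succ]
    ring

theorem thomaCoeff_mul_derangementValue_succ_succ {q : K} (hq : q ≠ 0) {j : ℕ}
    (hqj : q ^ (j + 1) ≠ 1) (z : K) (r : ℕ) :
    thomaCoeff q z (j + 1) * derangementValue q (r + 1) (j + 1) =
      q ^ (j + 1) * (thomaCoeff q z (j + 1) * derangementValue q r (j + 1)) -
        (q ^ j * z - 1) * (thomaCoeff q z j * derangementValue q r j) := by
  have hqj' : q ^ (j + 1) - 1 ≠ 0 := sub_ne_zero.mpr hqj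
  rw [derangementValue_succ_succ, derangementValue_succ, thomaCoeff_succ, zpow_neg, zpow_natCast]
  field_simp
  ring

theorem sum_pow_mul_thomaCoeff_mul_derangementValue_self {q : K} (hq : q ≠ 0) (z : K) {r : ℕ}
    (hqr : ∀ j < r, q ^ (j + 1) ≠ 1) :
    ∑ j ∈ range (r + 1), z ^ (r - j) * (thomaCoeff q z j * derangementValue q r j) = 1 := by
  induction r with
  | zero => simp [thomaCoeff_zero, derangementValue_zero]
  | succ r ih =>
    set b : ℕ → K := fun j ↦ thomaCoeff q z j * derangementValue q r j
    set s : ℕ → K := fun j ↦ q ^ j * z ^ (r + 1 - j) * b j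
    have hterm : ∀ j ∈ range (r + 1),
        z ^ (r + 1 - (j + 1)) * (thomaCoeff q z (j + 1) * derangementValue q (r + 1) (j + 1)) =
          (s (j + 1) - s j) + z ^ (r - j) * b j := by
      intro j hj
      have hjr : j ≤ r := Nat.lt_succ_iff.mp (mem_range.mp hj)
      simp only [s, b]
      rw [thomaCoeff_mul_derangementValue_succ_succ hq (hqr j (by omega)),
        show r + 1 - (j + 1) = r - j by omega, show r + 1 - j = r - j + 1 by omega]
      ring
    have hs_last : s (r + 1) = 0 := by
      simp [s, b, derangementValue_eq_zero_of_lt q (Nat.lt_succ_self r)]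
    have hs_zero : s 0 = z ^ (r + 1) := by simp [s, b, thomaCoeff_zero, derangementValue_zero]
    rw [sum_range_succ', sum_congr rfl hterm, sum_add_distrib, sum_range_sub s,
      ih fun j hj ↦ hqr j (by omega), hs_last, hs_zero, Nat.sub_zero, thomaCoeff_zero, derangementValue_zero]
    ring

theorem sum_pow_mul_thomaCoeff_mul_derangementValue {q : K} (hq : q ≠ 0) (z : K) {n r : ℕ}
    (hr : r ≤ n) (hqr : ∀ j < r, q ^ (j + 1) ≠ 1) :
    ∑ j ∈ range (n + 1), z ^ (n - j) * (thomaCoeff q z j * derangementValue q r j) =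
      z ^ (n - r) := by
  have hvanish : ∀ j ∈ range (n + 1), j ∉ range (r + 1) →
      z ^ (n - j) * (thomaCoeff q z j * derangementValue q r j) = 0 := by
    intro j _ hj
    rw [derangementValue_eq_zero_of_lt q (by simpa using hj), mul_zero, mul_zero]
  rw [← sum_subset (range_subset_range.mpr (by omega)) hvanish,
    ← mul_one (z ^ (n - r)), ← sum_pow_mul_thomaCoeff_mul_derangementValue_self hq z hqr,
    mul_sum]
  refine sum_congr rfl fun j hj ↦ ?_
  rw [← mul_assoc (z ^ (n - r)), ← pow_add, show n - r + (r - j) = n - j by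
    have := mem_range.mp hj; omega]

/-- Expansion of the generalized Thoma function `f_z` in the derangement characters `ψ_j`:
for real `q > 1`, `0 ≤ r ≤ n` and any `z ∈ ℂ`,
`z^{n-r} = Σ_{j=0}^n ( z^{n-j} ∏_{i=0}^{j-1} (q^{-i} - z)/(q^{i+1} - 1) ) ∏_{i=0}^{j-1} (q^r - q^i)`. -/
theorem f_z_expansion (q : ℝ) (hq : 1 < q) (n r : ℕ) (hr : r ≤ n) (z : ℂ) :
    z ^ (n - r) =
      ∑ j ∈ Finset.range (n + 1),
        (z ^ (n - j) * ∏ i ∈ Finset.range j,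
            ((q : ℂ) ^ (-(i : ℤ)) - z) / ((q : ℂ) ^ (i + 1) - 1)) *
          ∏ i ∈ Finset.range j, ((q : ℂ) ^ r - (q : ℂ) ^ i) := by
  have hq0 : (q : ℂ) ≠ 0 := Complex.ofReal_ne_zero.mpr (zero_lt_one.trans hq).ne'
  have hqpow : ∀ j < r, (q : ℂ) ^ (j + 1) ≠ 1 := fun j _ ↦ by
    exact_mod_cast (one_lt_pow₀ hq j.succ_ne_zero).ne'
  simpa only [thomaCoeff, derangementValue, mul_assoc] using
    (sum_pow_mul_thomaCoeff_mul_derangementValue hq0 z hr hqpow).symm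
end

section
/- Let Λ be a finite type and let f_0, f_1, …, f_n : Λ → ℝ be a linearly independent family with f_0(λ) ≥ 0 for all λ ∈ Λ. Let V be the ℝ-span of f_0,…,f_n and let C = { h ∈ V : h(λ) ≥ 0 for all λ ∈ Λ }. Let Z = { λ ∈ Λ : f_0(λ) = 0 }. Then the following are equivalent: (i) f_0 spans an extreme ray of C, i.e. every h ∈ C with f_0 − h ∈ C satisfies h = p·f_0 for some real p ≥ 0; (ii) the restrictions of f_1,…,f_n to Z are linearly independent as functions Z → ℝ. -/
private lemma exists_eps_aux {Λ : Type*} [Fintype Λ] (a g : Λ → ℝ)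
    (ha : ∀ l, 0 ≤ a l) (hz : ∀ l, a l = 0 → g l = 0) :
    ∃ ε : ℝ, 0 < ε ∧ ∀ l, ε * |g l| ≤ a l / 2 := by
  classical
  by_cases hs : ∃ l, g l ≠ 0
  · set s := Finset.univ.filter (fun l => g l ≠ 0) with hsdef
    have hsne : s.Nonempty := by
      obtain ⟨l, hl⟩ := hs
      exact ⟨l, by simp [hsdef, hl]⟩
    have hapos : ∀ l ∈ s, 0 < a l := by
      intro l hl
      simp only [hsdef, Finset.mem_filter] at hl
      rcases (ha l).lt_or_eq with h | h
      · exact h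
      · exact absurd (hz l h.symm) hl.2
    set ε := s.inf' hsne (fun l => a l / (2 * |g l|)) with hεdef
    have hεpos : 0 < ε := by
      rw [hεdef, Finset.lt_inf'_iff]
      intro l hl
      have hg : g l ≠ 0 := by simpa [hsdef] using hl
      have : 0 < |g l| := abs_pos.mpr hg
      exact div_pos (hapos l hl) (by linarith)
    refine ⟨ε, hεpos, fun l => ?_⟩
    by_cases hg : g l = 0
    · simp [hg]
      exact div_nonneg (ha l) (by norm_num)
    · have hls : l ∈ s := by simp [hsdef, hg]
      have hεle : ε ≤ a l / (2 * |g l|) := Finset.inf'_le _ hls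
      have hgpos : 0 < |g l| := abs_pos.mpr hg
      calc ε * |g l| ≤ (a l / (2 * |g l|)) * |g l| :=
            mul_le_mul_of_nonneg_right hεle (le_of_lt hgpos)
        _ = a l / 2 := by field_simp
  · push_neg at hs
    exact ⟨1, one_pos, fun l => by simp [hs l]; exact div_nonneg (ha l) (by norm_num)⟩

/-- Extremality criterion in a cone of pointwise-nonnegative functions: if `f 0, …, f n : Λ → ℝ`
are linearly independent and `f 0` is pointwise nonnegative, then `f 0` spans an extreme ray
of the cone `C = {h ∈ span(f 0, …, f n) : h ≥ 0 pointwise}` if and only if the restrictions of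
`f 1, …, f n` to the zero set `Z = {l : f 0 l = 0}` are linearly independent. -/
theorem extreme_iff_restrictions_linearIndependent
    {Λ : Type*} [Fintype Λ] (n : ℕ) (f : Fin (n + 1) → Λ → ℝ)
    (hli : LinearIndependent ℝ f) (hpos : ∀ l : Λ, 0 ≤ f 0 l) :
    (∀ h : Λ → ℝ, h ∈ Submodule.span ℝ (Set.range f) →
        (∀ l : Λ, 0 ≤ h l) → (∀ l : Λ, 0 ≤ f 0 l - h l) →
        ∃ p : ℝ, 0 ≤ p ∧ h = p • f 0) ↔
      LinearIndependent ℝ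
        (fun (i : Fin n) (l : {l : Λ // f 0 l = 0}) => f i.succ l.1) := by
  classical
  constructor
  · -- extreme → restrictions linearly independent
    intro hext
    rw [Fintype.linearIndependent_iff]
    intro c hc
    -- g is the combination
    set g : Λ → ℝ := fun l => ∑ i : Fin n, c i * f i.succ l with hgdef
    have hgz : ∀ l, f 0 l = 0 → g l = 0 := by
      intro l hl
      have := congrFun hc ⟨l, hl⟩
      simpa [hgdef, Finset.sum_apply] using this
    obtain ⟨ε, hεpos, hεle⟩ := exists_eps_aux (f 0) g hpos hgz
    set h : Λ → ℝ := fun l => f 0 l / 2 + ε * g l with hhdef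
    have habs : ∀ l, |ε * g l| ≤ f 0 l / 2 := by
      intro l
      rw [abs_mul, abs_of_pos hεpos]
      exact hεle l
    have hmem : h ∈ Submodule.span ℝ (Set.range f) := by
      rw [Submodule.mem_span_range_iff_exists_fun]
      refine ⟨Fin.cases (1/2) (fun i => ε * c i), ?_⟩
      funext l
      simp only [Finset.sum_apply, Pi.smul_apply, smul_eq_mul, Fin.sum_univ_succ,
        Fin.cases_zero, Fin.cases_succ, hhdef, hgdef, Finset.mul_sum]
      congr 1
      · ring
      · exact Finset.sum_congr rfl (fun i _ => by ring)
    have h0 : ∀ l, 0 ≤ h l := by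
      intro l
      have := habs l
      have := neg_abs_le (ε * g l)
      simp only [hhdef]
      linarith
    have h1 : ∀ l, 0 ≤ f 0 l - h l := by
      intro l
      have := habs l
      have := le_abs_self (ε * g l)
      simp only [hhdef]
      linarith
    obtain ⟨p, _, hp⟩ := hext h hmem h0 h1
    -- now express as full linear combination = 0
    have key : ∑ i : Fin (n+1), (Fin.cases (1/2 - p) (fun i => ε * c i) : Fin (n+1) → ℝ) i • f i = 0 := by
      funext l
      have := congrFun hp l
      simp only [hhdef, Pi.smul_apply, smul_eq_mul] at this
      simp only [Finset.sum_apply, Pi.smul_apply, smul_eq_mul, Fin.sum_univ_succ,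
        Fin.cases_zero, Fin.cases_succ, Pi.zero_apply]
      have hgl : ∑ i : Fin n, (ε * c i) * f i.succ l = ε * g l := by
        simp [hgdef, Finset.mul_sum]; apply Finset.sum_congr rfl; intros; ring
      rw [hgl]
      linarith
    have := Fintype.linearIndependent_iff.mp hli _ key
    intro i
    have hi := this i.succ
    simp only [Fin.cases_succ] at hi
    exact (mul_eq_zero.mp hi).resolve_left (ne_of_gt hεpos)
  · -- restrictions linearly independent → extreme
    intro hres h hmem h0 h1
    rw [Submodule.mem_span_range_iff_exists_fun] at hmem
    obtain ⟨c, hc⟩ := hmem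
    have hzero : ∀ l : Λ, f 0 l = 0 → h l = 0 :=
      fun l hl => le_antisymm (by have := h1 l; linarith) (h0 l)
    have hcz : ∀ i : Fin n, c i.succ = 0 := by
      have := Fintype.linearIndependent_iff.mp hres (fun i => c i.succ) ?_
      · exact this
      · funext l
        obtain ⟨l, hl⟩ := l
        have hhl : h l = 0 := hzero l hl
        have := congrFun hc l
        simp only [Finset.sum_apply, Pi.smul_apply, smul_eq_mul, Fin.sum_univ_succ, hl,
          mul_zero, zero_add] at this
        simp only [Finset.sum_apply, Pi.smul_apply, smul_eq_mul, Pi.zero_apply]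
        rw [this, hhl]
    have hh : h = c 0 • f 0 := by
      funext l
      have := congrFun hc l
      simp only [Finset.sum_apply, Pi.smul_apply, smul_eq_mul, Fin.sum_univ_succ] at this
      simp only [Pi.smul_apply, smul_eq_mul]
      rw [← this]
      rw [Finset.sum_eq_zero (fun i _ => by rw [hcz i]; ring)]
      ring
    refine ⟨c 0, ?_, hh⟩
    -- c 0 ≥ 0 since f 0 ≠ 0
    have hf0 : f 0 ≠ 0 := hli.ne_zero 0
    obtain ⟨l, hl⟩ : ∃ l, f 0 l ≠ 0 := by
      by_contra hcon
      push_neg at hcon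
      exact hf0 (funext hcon)
    have hfl : 0 < f 0 l := lt_of_le_of_ne (hpos l) (Ne.symm hl)
    have := h0 l
    rw [congrFun hh l] at this
    simp only [Pi.smul_apply, smul_eq_mul] at this
    exact nonneg_of_mul_nonneg_left this hfl
end

section
/- Let q > 1 be a real number and let i, j, k, n be natural numbers with i ≥ 0, j ≥ 0, i + j ≤ k < n. Let λ be the hook partition (n−k+i, 1^{k−i−j}), i.e. first row of length n−k+i and k−i−j further rows of length 1. Then (k choose j)_q · Σ_{μ ∈ H^-_{n−k}(λ)} dim_q(μ) = (k choose i)_q · (k−i choose j)_q · q^{binom(k−i−j,2)}, where the sum is over partitions μ obtained from λ by deleting a horizontal strip of n−k boxes and binom(m,2) = m(m−1)/2. -/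
/-- Hook length of the cell `c = (i, j)` (0-indexed) of `μ`:
`h(c) = μ_i + μ'_j - i - j - 1` in 0-indexed terms. -/
def hookLen (μ : YoungDiagram) (c : ℕ × ℕ) : ℕ :=
  μ.rowLen c.1 + μ.colLen c.2 - c.1 - c.2 - 1

/-- The `q`-hook-formula dimension of the unipotent character attached to `μ`:
`dim_q(μ) = q^{n(μ)} ∏_{i=1}^{|μ|}(q^i - 1) / ∏_{b ∈ μ}(q^{h(b)} - 1)`, where
`n(μ) = Σ_i (i-1) μ_i` is the sum of the (0-indexed) row coordinates of the cells. -/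
noncomputable def dimq (q : ℝ) (μ : YoungDiagram) : ℝ :=
  q ^ (∑ c ∈ μ.cells, c.1) * (∏ i ∈ Finset.range μ.card, (q ^ (i + 1) - 1)) /
    ∏ c ∈ μ.cells, (q ^ hookLen μ c - 1)

/-- `lam` is obtained from `μ` by adding a horizontal strip of `m` boxes:
`μ ⊆ lam`, the difference has `m` boxes, and no two of them lie in the same column. -/
def IsHStrip (μ lam : YoungDiagram) (m : ℕ) : Prop :=
  μ ≤ lam ∧ lam.card = μ.card + m ∧ ∀ j : ℕ, lam.colLen j ≤ μ.colLen j + 1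

lemma finite_card_le (c : ℕ) : {μ : YoungDiagram | μ.card ≤ c}.Finite := by
  have himg : ((fun μ : YoungDiagram => μ.cells) '' {μ | μ.card ≤ c}).Finite := by
    apply Set.Finite.subset ((Finset.range c ×ˢ Finset.range c).powerset : Finset _).finite_toSet
    rintro s ⟨μ, hμ, rfl⟩
    simp only [Finset.coe_powerset, Set.mem_preimage, Set.mem_powerset_iff,
      Finset.coe_subset, Finset.mem_coe]
    intro x hx
    have hx' : x ∈ μ := hx
    obtain ⟨i, j⟩ := x
    have h1 : i < μ.colLen j := YoungDiagram.mem_iff_lt_colLen.mp hx'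
    have h2 : j < μ.rowLen i := YoungDiagram.mem_iff_lt_rowLen.mp hx'
    have hc : μ.colLen j ≤ μ.card := by
      rw [YoungDiagram.colLen_eq_card]
      exact Finset.card_le_card (Finset.filter_subset _ _)
    have hr : μ.rowLen i ≤ μ.card := by
      rw [YoungDiagram.rowLen_eq_card]
      exact Finset.card_le_card (Finset.filter_subset _ _)
    simp only [Finset.mem_product, Finset.mem_range]
    exact ⟨lt_of_lt_of_le h1 (hc.trans hμ), lt_of_lt_of_le h2 (hr.trans hμ)⟩
  exact Set.Finite.of_finite_image himg (fun a _ b _ h => by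
    cases a; cases b; simpa using h)

lemma finite_hstrip_sub (lam : YoungDiagram) (m : ℕ) :
    {μ : YoungDiagram | IsHStrip μ lam m}.Finite :=
  (finite_card_le lam.card).subset (fun μ hμ => by
    have := hμ.2.1; simp only [Set.mem_setOf_eq]; omega)

lemma finite_hstrip_add (ν : YoungDiagram) (m : ℕ) :
    {μ : YoungDiagram | IsHStrip ν μ m}.Finite :=
  (finite_card_le (ν.card + m)).subset (fun μ hμ => by
    have := hμ.2.1; simp only [Set.mem_setOf_eq]; omega)

/-- `H⁻_m(lam)`: the (finite) set of diagrams obtained from `lam` by deleting a horizontal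
strip of `m` boxes. -/
noncomputable def Hsub (lam : YoungDiagram) (m : ℕ) : Finset YoungDiagram :=
  (finite_hstrip_sub lam m).toFinset

/-- `H⁺_m(ν)`: the (finite) set of diagrams obtained from `ν` by adding a horizontal
strip of `m` boxes. -/
noncomputable def Hadd (ν : YoungDiagram) (m : ℕ) : Finset YoungDiagram :=
  (finite_hstrip_add ν m).toFinset

/-- The Gaussian (q-)binomial coefficient. -/
noncomputable def gaussBinom (q : ℝ) (a b : ℕ) : ℝ :=
  ∏ i ∈ Finset.range b, (q ^ (a - i) - 1) / (q ^ (b - i) - 1)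



def hookD (b s : ℕ) : YoungDiagram where
  cells := (Finset.range (s+1) ×ˢ Finset.range b).filter fun c => c.1 = 0 ∨ c.2 = 0
  isLowerSet := by
    rintro ⟨x1, y1⟩ ⟨x2, y2⟩ ⟨hx, hy⟩ h
    simp only [Finset.coe_filter, Finset.mem_product, Finset.mem_range, Set.mem_setOf_eq] at h ⊢
    omega

lemma mem_hookD {b s x y : ℕ} : (x, y) ∈ hookD b s ↔ (x = 0 ∨ y = 0) ∧ x ≤ s ∧ y < b := by
  show (x, y) ∈ YoungDiagram.cells _ ↔ _
  simp only [hookD, Finset.mem_filter, Finset.mem_product, Finset.mem_range]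
  omega

lemma rowLen_eq_of {μ : YoungDiagram} {x L : ℕ} (h1 : ∀ y, y < L → (x, y) ∈ μ)
    (h2 : (x, L) ∉ μ) : μ.rowLen x = L := by
  rw [YoungDiagram.mem_iff_lt_rowLen] at h2
  rcases Nat.eq_zero_or_pos L with h | h
  · omega
  · have := YoungDiagram.mem_iff_lt_rowLen.mp (h1 (L - 1) (by omega))
    omega

lemma colLen_eq_of {μ : YoungDiagram} {y L : ℕ} (h1 : ∀ x, x < L → (x, y) ∈ μ)
    (h2 : (L, y) ∉ μ) : μ.colLen y = L := by
  rw [YoungDiagram.mem_iff_lt_colLen] at h2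
  rcases Nat.eq_zero_or_pos L with h | h
  · omega
  · have := YoungDiagram.mem_iff_lt_colLen.mp (h1 (L - 1) (by omega))
    omega

lemma rowLen_hookD (b s x : ℕ) :
    (hookD b s).rowLen x = if x = 0 then b else if x ≤ s ∧ 1 ≤ b then 1 else 0 := by
  split_ifs with h1 h2
  · exact rowLen_eq_of (fun y hy => mem_hookD.mpr (by omega)) (by rw [mem_hookD]; omega)
  · exact rowLen_eq_of (fun y hy => mem_hookD.mpr (by omega)) (by rw [mem_hookD]; omega)
  · exact rowLen_eq_of (fun y hy => by omega) (by rw [mem_hookD]; omega)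

lemma colLen_hookD (b s y : ℕ) :
    (hookD b s).colLen y = if y = 0 ∧ 1 ≤ b then s + 1 else if y < b then 1 else 0 := by
  split_ifs with h1 h2
  · exact colLen_eq_of (fun x hx => mem_hookD.mpr (by omega)) (by rw [mem_hookD]; omega)
  · exact colLen_eq_of (fun x hx => mem_hookD.mpr (by omega)) (by rw [mem_hookD]; omega)
  · exact colLen_eq_of (fun x hx => by omega) (by rw [mem_hookD]; omega)

lemma cells_hookD {b : ℕ} (s : ℕ) (hb : 1 ≤ b) :
    (hookD b s).cells =
      ({0} ×ˢ Finset.range b) ∪ (Finset.range s).image (fun t => (t + 1, 0)) := by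
  ext ⟨x, y⟩
  rw [YoungDiagram.mem_cells, mem_hookD]
  simp only [Finset.mem_union, Finset.mem_product, Finset.mem_singleton, Finset.mem_range,
    Finset.mem_image, Prod.mk.injEq]
  constructor
  · rintro ⟨h1, h2, h3⟩
    rcases h1 with rfl | rfl
    · exact Or.inl ⟨rfl, h3⟩
    · rcases Nat.eq_zero_or_pos x with rfl | hx
      · exact Or.inl ⟨rfl, by omega⟩
      · exact Or.inr ⟨x - 1, by omega, by omega, rfl⟩
  · rintro (⟨rfl, h⟩ | ⟨t, ht, rfl, rfl⟩)
    · exact ⟨Or.inl rfl, by omega, h⟩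
    · exact ⟨Or.inr rfl, by omega, hb⟩

lemma hookD_inj : Function.Injective (fun t : ℕ => (t + 1, (0:ℕ))) := by
  intro a b h; simpa using h

lemma hook_disj (b s : ℕ) :
    Disjoint ({(0:ℕ)} ×ˢ Finset.range b) ((Finset.range s).image (fun t => (t + 1, (0:ℕ)))) := by
  rw [Finset.disjoint_left]
  rintro ⟨x, y⟩ h1 h2
  simp only [Finset.mem_product, Finset.mem_singleton, Finset.mem_image, Finset.mem_range,
    Prod.mk.injEq] at h1 h2
  omega

lemma card_hookD {b : ℕ} (s : ℕ) (hb : 1 ≤ b) : (hookD b s).card = b + s := by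
  show (hookD b s).cells.card = b + s
  rw [cells_hookD s hb, Finset.card_union_of_disjoint (hook_disj b s),
    Finset.card_image_of_injective _ hookD_inj]
  simp [Nat.add_comm]

lemma hookD_zero (s : ℕ) : hookD 0 s = ⊥ := by
  ext ⟨x, y⟩
  rw [YoungDiagram.mem_cells, mem_hookD]
  simp

noncomputable def fq (q : ℝ) (m : ℕ) : ℝ := ∏ t ∈ Finset.range m, (q ^ (t + 1) - 1)

lemma fq_pos {q : ℝ} (hq : 1 < q) (m : ℕ) : 0 < fq q m := by
  apply Finset.prod_pos
  intro t _
  have : (1:ℝ) < q ^ (t + 1) := one_lt_pow₀ hq (by omega)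
  linarith

lemma fq_ne {q : ℝ} (hq : 1 < q) (m : ℕ) : fq q m ≠ 0 := (fq_pos hq m).ne'

lemma pow_sub_one_ne {q : ℝ} (hq : 1 < q) {m : ℕ} (hm : 1 ≤ m) : q ^ m - 1 ≠ 0 := by
  have : (1:ℝ) < q ^ m := one_lt_pow₀ hq (by omega)
  linarith

lemma fq_succ (q : ℝ) (m : ℕ) : fq q (m + 1) = fq q m * (q ^ (m + 1) - 1) :=
  Finset.prod_range_succ _ _

lemma prod_desc (q : ℝ) {a b : ℕ} (h : b ≤ a) :
    ∏ t ∈ Finset.range b, (q ^ (a - t) - 1) = ∏ t ∈ Finset.range b, (q ^ (a - b + t + 1) - 1) := by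
  rw [← Finset.prod_range_reflect (fun t => (q ^ (a - b + t + 1) - 1)) b]
  apply Finset.prod_congr rfl
  intro t ht
  simp only [Finset.mem_range] at ht
  congr 2
  omega

lemma fq_split (q : ℝ) {a b : ℕ} (h : b ≤ a) :
    fq q a = fq q (a - b) * ∏ t ∈ Finset.range b, (q ^ (a - t) - 1) := by
  obtain ⟨c, rfl⟩ : ∃ c, a = c + b := ⟨a - b, by omega⟩
  rw [prod_desc q h, Nat.add_sub_cancel, fq, fq, Finset.prod_range_add]

lemma gaussBinom_eq {q : ℝ} (hq : 1 < q) {a b : ℕ} (h : b ≤ a) :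
    gaussBinom q a b = fq q a / (fq q (a - b) * fq q b) := by
  rw [gaussBinom, Finset.prod_div_distrib]
  have hden : ∏ t ∈ Finset.range b, (q ^ (b - t) - 1) = fq q b := by
    rw [prod_desc q le_rfl, fq]
    apply Finset.prod_congr rfl; intro t _; congr 2; omega
  rw [hden, div_eq_div_iff (fq_ne hq b) (mul_ne_zero (fq_ne hq (a - b)) (fq_ne hq b)),
    fq_split q h]
  ring

lemma hookLen_hookD (b s x y : ℕ) :
    hookLen (hookD b s) (x, y) =
      (if x = 0 then b else if x ≤ s ∧ 1 ≤ b then 1 else 0) +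
        (if y = 0 ∧ 1 ≤ b then s + 1 else if y < b then 1 else 0) - x - y - 1 := by
  rw [hookLen, rowLen_hookD, colLen_hookD]

lemma sum_fst_hookD (b' s : ℕ) :
    ∑ c ∈ (hookD (b' + 1) s).cells, c.1 = (s + 1).choose 2 := by
  rw [cells_hookD s (by omega), Finset.sum_union (hook_disj _ _),
    Finset.sum_image (fun a _ b _ h => hookD_inj h)]
  have h0 : ∑ c ∈ ({(0:ℕ)} ×ˢ Finset.range (b' + 1)), c.1 = 0 := by
    apply Finset.sum_eq_zero
    rintro ⟨x, y⟩ hc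
    simp only [Finset.mem_product, Finset.mem_singleton] at hc
    exact hc.1
  rw [h0, zero_add]
  have h2 : ∑ t ∈ Finset.range (s + 1), t = ∑ x ∈ Finset.range s, ((x + 1, (0:ℕ)) : ℕ × ℕ).1 := by
    rw [Finset.sum_range_succ']; simp
  have h1 := Finset.sum_range_id_mul_two (s + 1)
  have h3 : (s + 1).choose 2 = (s + 1) * ((s + 1) - 1) / 2 := Nat.choose_two_right _
  omega

lemma prod_hook_hookD {q : ℝ} (b' s : ℕ) :
    ∏ c ∈ (hookD (b' + 1) s).cells, (q ^ hookLen (hookD (b' + 1) s) c - 1) =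
      (q ^ (b' + 1 + s) - 1) * fq q b' * fq q s := by
  rw [cells_hookD s (by omega), Finset.prod_union (hook_disj _ _),
    Finset.prod_image (fun a _ b _ h => hookD_inj h)]
  have hcol : ∏ t ∈ Finset.range s,
      (q ^ hookLen (hookD (b' + 1) s) ((t + 1, (0:ℕ)) : ℕ × ℕ) - 1) = fq q s := by
    have step : ∀ t ∈ Finset.range s,
        (q ^ hookLen (hookD (b' + 1) s) ((t + 1, (0:ℕ)) : ℕ × ℕ) - 1) = q ^ (s - t) - 1 := by
      intro t ht
      simp only [Finset.mem_range] at ht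
      have he : hookLen (hookD (b' + 1) s) (t + 1, 0) = s - t := by
        rw [hookLen_hookD]; split_ifs <;> (try simp_all) <;> omega
      rw [he]
    rw [Finset.prod_congr rfl step, prod_desc q le_rfl, fq]
    apply Finset.prod_congr rfl; intro t _; congr 2; omega
  have hrow : ∏ c ∈ ({(0:ℕ)} ×ˢ Finset.range (b' + 1)),
      (q ^ hookLen (hookD (b' + 1) s) c - 1) = (q ^ (b' + 1 + s) - 1) * fq q b' := by
    rw [Finset.prod_product, Finset.prod_singleton, Finset.prod_range_succ']
    have h00 : hookLen (hookD (b' + 1) s) (0, 0) = b' + 1 + s := by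
      rw [hookLen_hookD]; split_ifs <;> (try simp_all) <;> omega
    have hrest : ∏ y ∈ Finset.range b', (q ^ hookLen (hookD (b' + 1) s) (0, y + 1) - 1) =
        fq q b' := by
      have step : ∀ y ∈ Finset.range b',
          (q ^ hookLen (hookD (b' + 1) s) (0, y + 1) - 1) = q ^ (b' - y) - 1 := by
        intro y hy
        simp only [Finset.mem_range] at hy
        have he : hookLen (hookD (b' + 1) s) (0, y + 1) = b' - y := by
          rw [hookLen_hookD]; split_ifs <;> (try simp_all) <;> omega
        rw [he]
      rw [Finset.prod_congr rfl step, prod_desc q le_rfl, fq]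
      apply Finset.prod_congr rfl; intro t _; congr 2; omega
    rw [h00, hrest]
    ring
  rw [hcol, hrow]

lemma dimq_hookD {q : ℝ} (b' s : ℕ) :
    dimq q (hookD (b' + 1) s) =
      q ^ (s + 1).choose 2 * fq q (b' + 1 + s) /
        ((q ^ (b' + 1 + s) - 1) * fq q b' * fq q s) := by
  have hc : (hookD (b' + 1) s).card = b' + 1 + s := card_hookD s (by omega)
  rw [dimq, sum_fst_hookD, prod_hook_hookD, hc]
  rfl

lemma dimq_bot (q : ℝ) : dimq q ⊥ = 1 := by
  have hcard : (⊥ : YoungDiagram).card = 0 := by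
    show (⊥ : YoungDiagram).cells.card = 0
    simp
  rw [dimq, hcard, YoungDiagram.cells_bot]
  simp

lemma yd_ext {μ ν : YoungDiagram} (h : ∀ x y : ℕ, (x, y) ∈ μ ↔ (x, y) ∈ ν) : μ = ν := by
  ext ⟨x, y⟩
  rw [YoungDiagram.mem_cells, YoungDiagram.mem_cells]
  exact h x y

lemma rowLen_le_of_le {μ ν : YoungDiagram} (h : μ ≤ ν) (x : ℕ) : μ.rowLen x ≤ ν.rowLen x := by
  by_contra hc
  push_neg at hc
  have h1 : (x, ν.rowLen x) ∈ μ := YoungDiagram.mem_iff_lt_rowLen.mpr hc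
  have h2 : (x, ν.rowLen x) ∈ ν := YoungDiagram.cells_subset_iff.mpr h h1
  exact absurd (YoungDiagram.mem_iff_lt_rowLen.mp h2) (lt_irrefl _)

lemma colLen_le_of_le {μ ν : YoungDiagram} (h : μ ≤ ν) (y : ℕ) : μ.colLen y ≤ ν.colLen y := by
  by_contra hc
  push_neg at hc
  have h1 : (ν.colLen y, y) ∈ μ := YoungDiagram.mem_iff_lt_colLen.mpr hc
  have h2 : (ν.colLen y, y) ∈ ν := YoungDiagram.cells_subset_iff.mpr h h1
  exact absurd (YoungDiagram.mem_iff_lt_colLen.mp h2) (lt_irrefl _)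

lemma card_hookD0 (s : ℕ) : (hookD 0 s).card = 0 := by
  rw [hookD_zero]
  show (⊥ : YoungDiagram).cells.card = 0
  simp

lemma hookD_le_hookD {b1 s1 b2 s2 : ℕ} (hb : b1 ≤ b2) (hs : s1 ≤ s2) :
    hookD b1 s1 ≤ hookD b2 s2 := by
  rw [← YoungDiagram.cells_subset_iff]
  rintro ⟨x, y⟩ hc
  rw [YoungDiagram.mem_cells, mem_hookD] at hc ⊢
  omega

lemma isHStrip_hookD_iff {a r m : ℕ} (hm : 1 ≤ m) (hma : m ≤ a) (μ : YoungDiagram) :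
    IsHStrip μ (hookD a r) m ↔
      ((m < a ∨ r = 0) ∧ μ = hookD (a - m) r) ∨ (1 ≤ r ∧ μ = hookD (a - m + 1) (r - 1)) := by
  have ha : 1 ≤ a := le_trans hm hma
  constructor
  · rintro ⟨hle, hcard, hcol⟩
    have hcard_lam : (hookD a r).card = a + r := card_hookD r ha
    set b := μ.rowLen 0 with hbdef
    set sc := μ.colLen 0 with hscdef
    have hmemμ : ∀ x y : ℕ, (x, y) ∈ μ ↔ ((x = 0 ∧ y < b) ∨ (y = 0 ∧ x < sc)) := by
      intro x y
      constructor
      · intro hxy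
        rcases Nat.eq_zero_or_pos x with rfl | hx
        · exact Or.inl ⟨rfl, YoungDiagram.mem_iff_lt_rowLen.mp hxy⟩
        rcases Nat.eq_zero_or_pos y with rfl | hy
        · exact Or.inr ⟨rfl, YoungDiagram.mem_iff_lt_colLen.mp hxy⟩
        exfalso
        have h11 : (1, 1) ∈ μ := μ.up_left_mem hx hy hxy
        have h11' : (1, 1) ∈ hookD a r := YoungDiagram.cells_subset_iff.mpr hle h11
        rw [mem_hookD] at h11'
        omega
      · rintro (⟨rfl, hy⟩ | ⟨rfl, hx⟩)
        · exact YoungDiagram.mem_iff_lt_rowLen.mpr hy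
        · exact YoungDiagram.mem_iff_lt_colLen.mpr hx
    have hsc_ub : sc ≤ r + 1 := by
      have := colLen_le_of_le hle 0
      rwa [colLen_hookD, if_pos ⟨rfl, ha⟩] at this
    have hsc_lb : r + 1 ≤ sc + 1 := by
      have := hcol 0
      rwa [colLen_hookD, if_pos ⟨rfl, ha⟩] at this
    have hb_ub : b ≤ a := by
      have := rowLen_le_of_le hle 0
      rwa [rowLen_hookD, if_pos rfl] at this
    rcases Nat.eq_zero_or_pos b with hb0 | hb1
    · -- μ is empty
      have hsc0 : sc = 0 := by
        by_contra hsc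
        have : (0, 0) ∈ μ := (hmemμ 0 0).mpr (Or.inr ⟨rfl, by omega⟩)
        rw [YoungDiagram.mem_iff_lt_rowLen] at this
        omega
      have hr0 : r = 0 := by omega
      have hcells : μ.cells = ∅ := by
        apply Finset.eq_empty_of_forall_notMem
        rintro ⟨x, y⟩ hc
        rw [YoungDiagram.mem_cells, hmemμ] at hc
        omega
      have hcardμ : μ.card = 0 := by
        show μ.cells.card = 0
        rw [hcells, Finset.card_empty]
      have ham : a = m := by omega
      refine Or.inl ⟨Or.inr hr0, yd_ext fun x y => ?_⟩
      rw [hmemμ, mem_hookD]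
      omega
    · have hsc1 : 1 ≤ sc := by
        have : (0, 0) ∈ μ := YoungDiagram.mem_iff_lt_rowLen.mpr (by omega)
        rw [YoungDiagram.mem_iff_lt_colLen] at this
        omega
      have hμeq : μ = hookD b (sc - 1) := by
        apply yd_ext
        intro x y
        rw [hmemμ, mem_hookD]
        omega
      have hcardμ : μ.card = b + (sc - 1) := by
        rw [hμeq]
        exact card_hookD (sc - 1) hb1
      rcases (by omega : sc = r + 1 ∨ sc = r) with hsc | hsc
      · refine Or.inl ⟨Or.inl (by omega), ?_⟩
        rw [hμeq]
        congr 1 <;> omega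
      · refine Or.inr ⟨by omega, ?_⟩
        rw [hμeq]
        congr 1 <;> omega
  · rintro (⟨hcond, rfl⟩ | ⟨hr, rfl⟩)
    · refine ⟨hookD_le_hookD (by omega) le_rfl, ?_, ?_⟩
      · rcases Nat.eq_zero_or_pos (a - m) with h0 | h1
        · rw [h0, card_hookD r ha, card_hookD0]
          omega
        · rw [card_hookD r ha, card_hookD r h1]
          omega
      · intro j
        rw [colLen_hookD, colLen_hookD]
        split_ifs <;> omega
    · refine ⟨hookD_le_hookD (by omega) (by omega), ?_, ?_⟩
      · rw [card_hookD r ha, card_hookD (r - 1) (by omega)]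
        omega
      · intro j
        rw [colLen_hookD, colLen_hookD]
        split_ifs <;> omega

noncomputable instance : DecidableEq YoungDiagram := Classical.decEq _

lemma mem_Hsub {lam : YoungDiagram} {m : ℕ} {μ : YoungDiagram} :
    μ ∈ Hsub lam m ↔ IsHStrip μ lam m :=
  Set.Finite.mem_toFinset _

lemma fq_zero (q : ℝ) : fq q 0 = 1 := Finset.prod_range_zero _

lemma hookD_ne (i r : ℕ) : hookD i r ≠ hookD (i + 1) (r - 1) := by
  intro h
  have h1 : ((0:ℕ), i) ∈ hookD (i + 1) (r - 1) := mem_hookD.mpr (by omega)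
  rw [← h, mem_hookD] at h1
  omega

lemma choose_two_succ (r : ℕ) : (r + 1).choose 2 = r.choose 2 + r := by
  rw [Nat.choose_succ_succ, Nat.choose_one_right, Nat.add_comm]

lemma sum_Hsub_hookD {q : ℝ} (hq : 1 < q) (i r m : ℕ) (hm : 1 ≤ m) :
    ∑ μ ∈ Hsub (hookD (m + i) r) m, dimq q μ =
      q ^ r.choose 2 * fq q (i + r) / (fq q i * fq q r) := by
  have hident : ∀ μ : YoungDiagram, μ ∈ Hsub (hookD (m + i) r) m ↔
      ((m < m + i ∨ r = 0) ∧ μ = hookD i r) ∨ (1 ≤ r ∧ μ = hookD (i + 1) (r - 1)) := by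
    intro μ
    rw [mem_Hsub, isHStrip_hookD_iff hm (by omega)]
    rw [Nat.add_sub_cancel_left]
  rcases Nat.eq_zero_or_pos i with rfl | hi
  · rcases Nat.eq_zero_or_pos r with rfl | hr
    · -- i = 0, r = 0
      have hset : Hsub (hookD (m + 0) 0) m = {hookD 0 0} := by
        apply Finset.ext
        intro μ
        rw [hident, Finset.mem_singleton]
        constructor
        · rintro (⟨_, rfl⟩ | ⟨h, _⟩) <;> first | rfl | omega
        · rintro rfl; exact Or.inl ⟨Or.inr rfl, rfl⟩
      rw [hset, Finset.sum_singleton, hookD_zero, dimq_bot, fq_zero]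
      norm_num
    · -- i = 0, r ≥ 1
      obtain ⟨r', rfl⟩ : ∃ r', r = r' + 1 := ⟨r - 1, by omega⟩
      have hset : Hsub (hookD (m + 0) (r' + 1)) m = {hookD 1 r'} := by
        apply Finset.ext
        intro μ
        rw [hident, Finset.mem_singleton]
        constructor
        · rintro (⟨hcond, rfl⟩ | ⟨_, rfl⟩)
          · omega
          · rfl
        · rintro rfl; exact Or.inr ⟨by omega, rfl⟩
      rw [hset, Finset.sum_singleton]
      have hd := dimq_hookD (q := q) 0 r'
      rw [show (0:ℕ) + 1 + r' = r' + 1 by omega] at hd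
      rw [hd, fq_zero, show (0:ℕ) + (r' + 1) = r' + 1 by omega, fq_succ q r']
      have h1 : q ^ (r' + 1) - 1 ≠ 0 := pow_sub_one_ne hq (by omega)
      have h2 : fq q r' ≠ 0 := fq_ne hq r'
      rw [div_eq_div_iff (mul_ne_zero (mul_ne_zero h1 one_ne_zero) h2)
        (mul_ne_zero one_ne_zero (mul_ne_zero h2 h1))]
      ring
  · obtain ⟨i', rfl⟩ : ∃ i', i = i' + 1 := ⟨i - 1, by omega⟩
    rcases Nat.eq_zero_or_pos r with rfl | hr
    · -- i ≥ 1, r = 0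
      have hset : Hsub (hookD (m + (i' + 1)) 0) m = {hookD (i' + 1) 0} := by
        apply Finset.ext
        intro μ
        rw [hident, Finset.mem_singleton]
        constructor
        · rintro (⟨_, rfl⟩ | ⟨h, _⟩) <;> first | rfl | omega
        · rintro rfl; exact Or.inl ⟨Or.inl (by omega), rfl⟩
      rw [hset, Finset.sum_singleton]
      have hd := dimq_hookD (q := q) i' 0
      rw [show i' + 1 + 0 = i' + 1 by omega] at hd
      rw [hd, fq_zero, fq_succ q i',
        show ((0:ℕ) + 1).choose 2 = 0 from rfl, show (0:ℕ).choose 2 = 0 from rfl]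
      have h1 : q ^ (i' + 1) - 1 ≠ 0 := pow_sub_one_ne hq (by omega)
      have h2 : fq q i' ≠ 0 := fq_ne hq i'
      rw [div_eq_div_iff (mul_ne_zero (mul_ne_zero h1 h2) one_ne_zero)
        (mul_ne_zero (mul_ne_zero h2 h1) one_ne_zero)]
      ring
    · -- i ≥ 1, r ≥ 1
      obtain ⟨r', rfl⟩ : ∃ r', r = r' + 1 := ⟨r - 1, by omega⟩
      set i : ℕ := i' + 1 with hidef
      set r : ℕ := r' + 1 with hrdef
      have hset : Hsub (hookD (m + i) r) m = {hookD i r, hookD (i + 1) (r - 1)} := by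
        apply Finset.ext
        intro μ
        rw [hident, Finset.mem_insert, Finset.mem_singleton]
        constructor
        · rintro (⟨_, rfl⟩ | ⟨_, rfl⟩)
          · exact Or.inl rfl
          · exact Or.inr rfl
        · rintro (rfl | rfl)
          · exact Or.inl ⟨Or.inl (by omega), rfl⟩
          · exact Or.inr ⟨by omega, rfl⟩
      rw [hset, Finset.sum_pair (hookD_ne i r)]
      have hr1 : r - 1 = r' := by omega
      have hd1 : dimq q (hookD i r) =
          q ^ (r.choose 2 + r) * fq q (i + r) / ((q ^ (i + r) - 1) * fq q i' * fq q r) := by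
        have := dimq_hookD (q := q) i' r
        rwa [show i' + 1 + r = i + r from rfl, choose_two_succ r] at this
      have hd2 : dimq q (hookD (i + 1) (r - 1)) =
          q ^ r.choose 2 * fq q (i + r) / ((q ^ (i + r) - 1) * fq q i * fq q r') := by
        rw [hr1]
        have := dimq_hookD (q := q) i r'
        rwa [show i + 1 + r' = i + r by omega, show r' + 1 = r from rfl] at this
      rw [hd1, hd2]
      have hfi : fq q i = fq q i' * (q ^ i - 1) := fq_succ q i'
      have hfr : fq q r = fq q r' * (q ^ r - 1) := fq_succ q r'
      have hir : q ^ (i + r) = q ^ i * q ^ r := pow_add q i r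
      have hcr : q ^ (r.choose 2 + r) = q ^ r.choose 2 * q ^ r := pow_add q _ r
      have n1 : q ^ (i + r) - 1 ≠ 0 := pow_sub_one_ne hq (by omega)
      have n2 : fq q i' ≠ 0 := fq_ne hq i'
      have n3 : fq q r' ≠ 0 := fq_ne hq r'
      have n4 : q ^ i - 1 ≠ 0 := pow_sub_one_ne hq (by omega)
      have n5 : q ^ r - 1 ≠ 0 := pow_sub_one_ne hq (by omega)
      rw [hfi, hfr, hcr]
      rw [div_add_div _ _
        (mul_ne_zero (mul_ne_zero n1 n2) (mul_ne_zero n3 n5))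
        (mul_ne_zero (mul_ne_zero n1 (mul_ne_zero n2 n4)) n3)]
      rw [div_eq_div_iff
        (mul_ne_zero (mul_ne_zero (mul_ne_zero n1 n2) (mul_ne_zero n3 n5))
          (mul_ne_zero (mul_ne_zero n1 (mul_ne_zero n2 n4)) n3))
        (mul_ne_zero (mul_ne_zero n2 n4) (mul_ne_zero n3 n5))]
      rw [hir]
      ring

/-- Multiplicity of a hook diagram: for the hook `λ = (n-k+i, 1^{k-i-j})` with
`i, j ≥ 0`, `i + j ≤ k < n`, one has
`(k choose j)_q · Σ_{μ ∈ H⁻_{n-k}(λ)} dim_q(μ) = (k choose i)_q (k-i choose j)_q q^{C(k-i-j,2)}`. -/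
theorem hook_multiplicity (q : ℝ) (hq : 1 < q) (i j k n : ℕ)
    (hij : i + j ≤ k) (hkn : k < n)
    (lam : YoungDiagram)
    (h0 : lam.rowLen 0 = n - k + i)
    (ht : ∀ t : ℕ, 1 ≤ t → lam.rowLen t = if t ≤ k - i - j then 1 else 0) :
    gaussBinom q k j * ∑ μ ∈ Hsub lam (n - k), dimq q μ =
      gaussBinom q k i * gaussBinom q (k - i) j * q ^ ((k - i - j).choose 2) := by
  have hm : 1 ≤ n - k := by omega
  set r := k - i - j with hrdef
  have hlam : lam = hookD (n - k + i) r := by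
    apply yd_ext
    intro x y
    rw [mem_hookD]
    rcases Nat.eq_zero_or_pos x with rfl | hx
    · rw [YoungDiagram.mem_iff_lt_rowLen, h0]
      omega
    · rw [YoungDiagram.mem_iff_lt_rowLen, ht x hx]
      split_ifs with hcase <;> omega
  rw [hlam, sum_Hsub_hookD hq i r (n - k) hm]
  rw [gaussBinom_eq hq (show j ≤ k by omega), gaussBinom_eq hq (show i ≤ k by omega),
    gaussBinom_eq hq (show j ≤ k - i by omega)]
  rw [show k - j = i + r by omega, show k - i - j = r by omega]
  have n1 : fq q k ≠ 0 := fq_ne hq k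
  have n2 : fq q (i + r) ≠ 0 := fq_ne hq (i + r)
  have n3 : fq q j ≠ 0 := fq_ne hq j
  have n4 : fq q i ≠ 0 := fq_ne hq i
  have n5 : fq q r ≠ 0 := fq_ne hq r
  have n6 : fq q (k - i) ≠ 0 := fq_ne hq (k - i)
  field_simp
end

section
/- Let q > 1 be a real number, let n ≥ 1, and let r be an integer with 0 ≤ r < n. Then Σ_{k=0}^{n-1} q^k · ( ∏_{i=k+1}^{n-1} (1 − q^i) ) · ∏_{i=0}^{k-1} (q^r − q^i) = ( ∏_{i=1}^{n-1} (1 − q^i) ) · ( ∏_{i=1}^{r} (1 − q^i) ). Equivalently, since ∏_{i=0}^{n-1}(q^r − q^i) = 0 for r < n, the derangement function τ̂_n^{(n)} = ψ_n^{(n)} − Σ_{k=0}^{n-1} ((n−1)_q!/k_q!) q^k ψ_k^{(n)} takes the value −(n−1)_q! · r_q! at every group element g with r(g) = r < n. -/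
/-- Shift identity: `∏_{i<k+1}(q^{r+1} - q^i) = (q^{r+1}-1) q^k ∏_{i<k}(q^r - q^i)`. -/
private lemma hb_aux (q : ℝ) (r k : ℕ) :
    (∏ i ∈ Finset.range (k + 1), (q ^ (r + 1) - q ^ i)) =
      (q ^ (r + 1) - 1) * q ^ k * ∏ i ∈ Finset.range k, (q ^ r - q ^ i) := by
  rw [Finset.prod_range_succ']
  have h : ∀ i, q ^ (r + 1) - q ^ (i + 1) = q * (q ^ r - q ^ i) := by
    intro i; rw [pow_succ, pow_succ]; ring
  rw [Finset.prod_congr rfl fun i _ => h i, Finset.prod_mul_distrib,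
    Finset.prod_const, Finset.card_range, pow_zero]
  ring

private lemma step_lem (q t : ℝ) (r : ℕ) :
    ∑ k ∈ Finset.range (r + 1 + 1),
        t ^ k * (∏ i ∈ Finset.Ico (k + 1) (r + 1 + 1), (1 - q ^ i)) *
          ∏ i ∈ Finset.range k, (q ^ (r + 1) - q ^ i)
      = (1 - q ^ (r + 1)) * (1 - t) *
          ∑ k ∈ Finset.range (r + 1),
            (t * q) ^ k * (∏ i ∈ Finset.Ico (k + 1) (r + 1), (1 - q ^ i)) *
              ∏ i ∈ Finset.range k, (q ^ r - q ^ i) := by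
  -- abbreviations as plain terms
  set E : ℝ := ∑ k ∈ Finset.range r,
      t ^ (k + 1) * q ^ k * (∏ i ∈ Finset.Ico (k + 2) (r + 1), (1 - q ^ i)) *
        ∏ i ∈ Finset.range k, (q ^ r - q ^ i) with hE
  set B : ℝ := ∏ i ∈ Finset.range r, (q ^ r - q ^ i) with hBdef
  set P : ℝ := ∏ i ∈ Finset.Ico 1 (r + 1), (1 - q ^ i) with hPdef
  -- Right-hand side computation
  have hR : (1 - t) * ∑ k ∈ Finset.range (r + 1),
      (t * q) ^ k * (∏ i ∈ Finset.Ico (k + 1) (r + 1), (1 - q ^ i)) *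
        ∏ i ∈ Finset.range k, (q ^ r - q ^ i)
      = (q ^ (r + 1) - 1) * E + P - t ^ (r + 1) * q ^ r * B := by
    have h1 : ∑ k ∈ Finset.range (r + 1),
        (t * q) ^ k * (∏ i ∈ Finset.Ico (k + 1) (r + 1), (1 - q ^ i)) *
          ∏ i ∈ Finset.range k, (q ^ r - q ^ i)
        = (∑ k ∈ Finset.range r,
            (t * q) ^ (k + 1) * (∏ i ∈ Finset.Ico (k + 1 + 1) (r + 1), (1 - q ^ i)) *
              ∏ i ∈ Finset.range (k + 1), (q ^ r - q ^ i))
          + (t * q) ^ 0 * (∏ i ∈ Finset.Ico (0 + 1) (r + 1), (1 - q ^ i)) *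
              ∏ i ∈ Finset.range 0, (q ^ r - q ^ i) :=
      Finset.sum_range_succ' _ _
    have h2 : ∑ k ∈ Finset.range (r + 1),
        (t * q) ^ k * (∏ i ∈ Finset.Ico (k + 1) (r + 1), (1 - q ^ i)) *
          ∏ i ∈ Finset.range k, (q ^ r - q ^ i)
        = (∑ k ∈ Finset.range r,
            (t * q) ^ k * (∏ i ∈ Finset.Ico (k + 1) (r + 1), (1 - q ^ i)) *
              ∏ i ∈ Finset.range k, (q ^ r - q ^ i))
          + (t * q) ^ r * (∏ i ∈ Finset.Ico (r + 1) (r + 1), (1 - q ^ i)) *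
              ∏ i ∈ Finset.range r, (q ^ r - q ^ i) :=
      Finset.sum_range_succ _ _
    have hkey : (∑ k ∈ Finset.range r,
            (t * q) ^ (k + 1) * (∏ i ∈ Finset.Ico (k + 1 + 1) (r + 1), (1 - q ^ i)) *
              ∏ i ∈ Finset.range (k + 1), (q ^ r - q ^ i))
          - t * ∑ k ∈ Finset.range r,
            (t * q) ^ k * (∏ i ∈ Finset.Ico (k + 1) (r + 1), (1 - q ^ i)) *
              ∏ i ∈ Finset.range k, (q ^ r - q ^ i)
        = (q ^ (r + 1) - 1) * E := by
      rw [hE, Finset.mul_sum, Finset.mul_sum, ← Finset.sum_sub_distrib]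
      refine Finset.sum_congr rfl fun k hk => ?_
      have hkr : k < r := Finset.mem_range.mp hk
      rw [Finset.prod_range_succ,
        Finset.prod_eq_prod_Ico_succ_bot (show k + 1 < r + 1 by omega) (fun i => 1 - q ^ i)]
      ring
    calc (1 - t) * ∑ k ∈ Finset.range (r + 1),
        (t * q) ^ k * (∏ i ∈ Finset.Ico (k + 1) (r + 1), (1 - q ^ i)) *
          ∏ i ∈ Finset.range k, (q ^ r - q ^ i)
        = (∑ k ∈ Finset.range (r + 1),
            (t * q) ^ k * (∏ i ∈ Finset.Ico (k + 1) (r + 1), (1 - q ^ i)) *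
              ∏ i ∈ Finset.range k, (q ^ r - q ^ i))
          - t * ∑ k ∈ Finset.range (r + 1),
            (t * q) ^ k * (∏ i ∈ Finset.Ico (k + 1) (r + 1), (1 - q ^ i)) *
              ∏ i ∈ Finset.range k, (q ^ r - q ^ i) := by ring
      _ = (q ^ (r + 1) - 1) * E + P - t ^ (r + 1) * q ^ r * B := by
          nth_rewrite 1 [h1]
          nth_rewrite 1 [h2]
          simp only [pow_zero, one_mul, Finset.range_zero, Finset.prod_empty, mul_one,
            Finset.Ico_self, zero_add]
          linear_combination hkey
  -- Left-hand side computation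
  have hL : ∑ k ∈ Finset.range (r + 1 + 1),
      t ^ k * (∏ i ∈ Finset.Ico (k + 1) (r + 1 + 1), (1 - q ^ i)) *
        ∏ i ∈ Finset.range k, (q ^ (r + 1) - q ^ i)
      = ((1 - q ^ (r + 1)) * (q ^ (r + 1) - 1)) * E
        + t ^ (r + 1) * ((q ^ (r + 1) - 1) * q ^ r * B)
        + P * (1 - q ^ (r + 1)) := by
    have h1 : ∑ k ∈ Finset.range (r + 1 + 1),
        t ^ k * (∏ i ∈ Finset.Ico (k + 1) (r + 1 + 1), (1 - q ^ i)) *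
          ∏ i ∈ Finset.range k, (q ^ (r + 1) - q ^ i)
        = (∑ k ∈ Finset.range (r + 1),
            t ^ (k + 1) * (∏ i ∈ Finset.Ico (k + 1 + 1) (r + 1 + 1), (1 - q ^ i)) *
              ∏ i ∈ Finset.range (k + 1), (q ^ (r + 1) - q ^ i))
          + t ^ 0 * (∏ i ∈ Finset.Ico (0 + 1) (r + 1 + 1), (1 - q ^ i)) *
              ∏ i ∈ Finset.range 0, (q ^ (r + 1) - q ^ i) :=
      Finset.sum_range_succ' _ _
    rw [h1, Finset.sum_range_succ]
    have hmain : ∑ k ∈ Finset.range r,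
        t ^ (k + 1) * (∏ i ∈ Finset.Ico (k + 1 + 1) (r + 1 + 1), (1 - q ^ i)) *
          ∏ i ∈ Finset.range (k + 1), (q ^ (r + 1) - q ^ i)
        = ((1 - q ^ (r + 1)) * (q ^ (r + 1) - 1)) * E := by
      rw [hE, Finset.mul_sum]
      refine Finset.sum_congr rfl fun k hk => ?_
      have hkr : k < r := Finset.mem_range.mp hk
      rw [hb_aux, Finset.prod_Ico_succ_top (show k + 1 + 1 ≤ r + 1 by omega)]
      ring
    rw [hmain, hb_aux]
    rw [Finset.Ico_self, Finset.prod_empty]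
    rw [Finset.prod_Ico_succ_top (show 0 + 1 ≤ r + 1 by omega)]
    simp only [pow_zero, one_mul, Finset.range_zero, Finset.prod_empty, mul_one, zero_add]
    rfl
  rw [hL, mul_assoc ((1 : ℝ) - q ^ (r + 1)) (1 - t), hR]
  ring

/-- The key closed form:
`Σ_{k=0}^{r} t^k (∏_{i=k+1}^{r}(1-q^i)) ∏_{i<k}(q^r - q^i)
  = (∏_{i=1}^{r}(1-q^i)) ∏_{i<r}(1 - t q^i)`. -/
private lemma T_closed (q : ℝ) : ∀ (r : ℕ) (t : ℝ),
    ∑ k ∈ Finset.range (r + 1),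
        t ^ k * (∏ i ∈ Finset.Ico (k + 1) (r + 1), (1 - q ^ i)) *
          ∏ i ∈ Finset.range k, (q ^ r - q ^ i)
      = (∏ i ∈ Finset.Ico 1 (r + 1), (1 - q ^ i)) * ∏ i ∈ Finset.range r, (1 - t * q ^ i) := by
  intro r
  induction r with
  | zero => intro t; simp
  | succ r ih =>
    intro t
    rw [step_lem, ih (t * q)]
    rw [Finset.prod_Ico_succ_top (show 1 ≤ r + 1 by omega)]
    rw [Finset.prod_range_succ']
    have h : ∀ i, 1 - t * q ^ (i + 1) = 1 - t * q * q ^ i := by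
      intro i; rw [pow_succ]; ring
    rw [Finset.prod_congr rfl fun i _ => h i]
    simp only [pow_zero, mul_one]
    ring

/-- For real `q > 1`, `n ≥ 1` and `0 ≤ r < n`:
`Σ_{k=0}^{n-1} q^k (∏_{i=k+1}^{n-1}(1 - q^i)) ∏_{i=0}^{k-1}(q^r - q^i)
  = (∏_{i=1}^{n-1}(1 - q^i)) (∏_{i=1}^{r}(1 - q^i))`,
i.e. the derangement function `τ̂_n^{(n)} = ψ_n^{(n)} - Σ_{k<n} ((n-1)_q!/k_q!) q^k ψ_k^{(n)}`
takes the value `-(n-1)_q! · r_q!` at every `g` with `r(g) = r < n`. -/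
theorem tau_hat_value (q : ℝ) (hq : 1 < q) (n r : ℕ) (hn : 1 ≤ n) (hr : r < n) :
    ∑ k ∈ Finset.range n,
        q ^ k * (∏ i ∈ Finset.Ico (k + 1) n, (1 - q ^ i)) *
          ∏ i ∈ Finset.range k, (q ^ r - q ^ i) =
      (∏ i ∈ Finset.Ico 1 n, (1 - q ^ i)) * ∏ i ∈ Finset.Ico 1 (r + 1), (1 - q ^ i) := by
  have hsub : Finset.range (r + 1) ⊆ Finset.range n := by
    intro x hx
    simp only [Finset.mem_range] at *
    omega
  have hzero : ∀ k ∈ Finset.range n, k ∉ Finset.range (r + 1) →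
      q ^ k * (∏ i ∈ Finset.Ico (k + 1) n, (1 - q ^ i)) *
        ∏ i ∈ Finset.range k, (q ^ r - q ^ i) = 0 := by
    intro k _ hk'
    have hrk : r < k := by
      simp only [Finset.mem_range, not_lt] at hk'
      omega
    have hz : (∏ i ∈ Finset.range k, (q ^ r - q ^ i)) = 0 :=
      Finset.prod_eq_zero (Finset.mem_range.mpr hrk) (sub_self _)
    rw [hz, mul_zero]
  rw [← Finset.sum_subset hsub hzero]
  have hsplit : ∑ k ∈ Finset.range (r + 1),
      q ^ k * (∏ i ∈ Finset.Ico (k + 1) n, (1 - q ^ i)) *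
        ∏ i ∈ Finset.range k, (q ^ r - q ^ i)
      = (∏ i ∈ Finset.Ico (r + 1) n, (1 - q ^ i)) *
        ∑ k ∈ Finset.range (r + 1),
          q ^ k * (∏ i ∈ Finset.Ico (k + 1) (r + 1), (1 - q ^ i)) *
            ∏ i ∈ Finset.range k, (q ^ r - q ^ i) := by
    rw [Finset.mul_sum]
    refine Finset.sum_congr rfl fun k hk => ?_
    have hkr : k < r + 1 := Finset.mem_range.mp hk
    rw [← Finset.prod_Ico_consecutive (fun i => (1 - q ^ i)) (show k + 1 ≤ r + 1 by omega)
      (show r + 1 ≤ n by omega)]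
    ring
  rw [hsplit, T_closed q r q]
  have hIco : (∏ i ∈ Finset.Ico 1 (r + 1), (1 - q ^ i)) = ∏ i ∈ Finset.range r, (1 - q * q ^ i) := by
    rw [Finset.prod_Ico_eq_prod_range]
    simp only [Nat.add_sub_cancel]
    refine Finset.prod_congr rfl fun i _ => ?_
    rw [pow_add, pow_one]
  rw [← hIco]
  rw [← Finset.prod_Ico_consecutive (fun i => (1 - q ^ i)) (show 1 ≤ r + 1 by omega)
    (show r + 1 ≤ n by omega)]
  ring
end

section
/- Let q > 1 be a real number. For natural numbers k and r define T_k(r) = Σ_{j=0}^{k} (−1)^{k−j} · q^{binom(k−j,2)} · (k choose j)_q · ∏_{i=0}^{j-1} (q^r − q^i). Then for every k ≥ 2 and every r ≥ 0, T_k(r+1) = q^k · T_k(r) + 2 q^{k−1}(q^k − 1) · T_{k−1}(r) + q^{k−2}(q^{k−1} − 1)(q^k − 1) · T_{k−2}(r). -/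
/-- The value of the stable character `τ_k` at an element with fixed-space dimension `r`:
`T_k(r) = Σ_{j=0}^k (-1)^{k-j} q^{C(k-j,2)} (k choose j)_q ∏_{i=0}^{j-1}(q^r - q^i)`. -/
noncomputable def T (q : ℝ) (k r : ℕ) : ℝ :=
  ∑ j ∈ Finset.range (k + 1),
    (-1 : ℝ) ^ (k - j) * q ^ ((k - j).choose 2) * gaussBinom q k j *
      ∏ i ∈ Finset.range j, (q ^ r - q ^ i)

noncomputable def Nq (q : ℝ) (a b : ℕ) : ℝ :=
  ∏ i ∈ Finset.range b, (q ^ (a - i) - 1)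

lemma gauss_eq_div (q : ℝ) (a b : ℕ) : gaussBinom q a b = Nq q a b / Nq q b b := by
  simp [gaussBinom, Nq, Finset.prod_div_distrib]

lemma Nq_succ (q : ℝ) (a b : ℕ) : Nq q a (b + 1) = Nq q a b * (q ^ (a - b) - 1) :=
  Finset.prod_range_succ _ _

lemma Nq_succ' (q : ℝ) (a b : ℕ) : Nq q (a + 1) (b + 1) = (q ^ (a + 1) - 1) * Nq q a b := by
  rw [Nq, Finset.prod_range_succ']
  simp [Nq, mul_comm]

lemma Nq_shift (q : ℝ) (a b : ℕ) :
    Nq q (a + b + 1) b * (q ^ (a + 1) - 1) = (q ^ (a + b + 1) - 1) * Nq q (a + b) b := by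
  induction b with
  | zero => simp [Nq, mul_comm]
  | succ b ih =>
    have h1 : a + (b + 1) + 1 = (a + b + 1) + 1 := by omega
    rw [h1, Nq_succ' q (a + b + 1) b]
    have h2 : a + (b + 1) = (a + b) + 1 := by omega
    rw [h2, Nq_succ' q (a + b) b]
    calc (q ^ (a + b + 1 + 1) - 1) * Nq q (a + b + 1) b * (q ^ (a + 1) - 1)
        = (q ^ (a + b + 1 + 1) - 1) * (Nq q (a + b + 1) b * (q ^ (a + 1) - 1)) := by ring
      _ = (q ^ (a + b + 1 + 1) - 1) * ((q ^ (a + b + 1) - 1) * Nq q (a + b) b) := by rw [ih]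

lemma Nq_pos (q : ℝ) (hq : 1 < q) (a b : ℕ) (h : b ≤ a) : 0 < Nq q a b := by
  apply Finset.prod_pos
  intro i hi
  rw [Finset.mem_range] at hi
  have : (1:ℝ) < q ^ (a - i) := by
    apply one_lt_pow₀ hq
    omega
  linarith

lemma gauss_diag (q : ℝ) (hq : 1 < q) (a : ℕ) : gaussBinom q a a = 1 := by
  rw [gauss_eq_div]
  exact div_self (ne_of_gt (Nq_pos q hq a a le_rfl))

lemma gauss_zero (q : ℝ) (a b : ℕ) (h : a < b) : gaussBinom q a b = 0 := by
  rw [gaussBinom]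
  apply Finset.prod_eq_zero (Finset.mem_range.mpr h)
  simp [Nat.sub_self]

noncomputable def Aq (q : ℝ) (k j : ℕ) : ℝ :=
  (-1:ℝ)^(k-j) * q^((k-j).choose 2) * gaussBinom q k j

lemma Aq_zero (q : ℝ) (a b : ℕ) (h : a < b) : Aq q a b = 0 := by
  simp [Aq, gauss_zero q a b h]

set_option maxHeartbeats 2000000 in
lemma coeff_main (q : ℝ) (hq : 1 < q) (j n : ℕ) :
    q^j * Aq q (j+n+2) j + q^j*(q^(j+1)-1) * Aq q (j+n+2) (j+1)
      = q^(j+n+2) * Aq q (j+n+2) j + 2*q^(j+n+1)*(q^(j+n+2)-1) * Aq q (j+n+1) j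
        + q^(j+n)*(q^(j+n+1)-1)*(q^(j+n+2)-1) * Aq q (j+n) j := by
  have hpow : ∀ m : ℕ, (0:ℝ) < q ^ (m+1) - 1 := fun m => by
    have := one_lt_pow₀ hq (show m+1 ≠ 0 by omega); linarith
  have hE : Nq q j j ≠ 0 := ne_of_gt (Nq_pos q hq j j le_rfl)
  have h3 : Nq q (j+n+1) j = (q^(j+n+1)-1) * Nq q (j+n) j / (q^(n+1)-1) := by
    rw [eq_div_iff (ne_of_gt (hpow n))]
    have h := Nq_shift q n j
    have e1 : n + j + 1 = j + n + 1 := by omega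
    have e2 : n + j = j + n := by omega
    rw [e1, e2] at h
    exact h
  have h2 : Nq q (j+n+2) j = (q^(j+n+2)-1) * Nq q (j+n+1) j / (q^(n+2)-1) := by
    rw [eq_div_iff (ne_of_gt (hpow (n+1)))]
    have h := Nq_shift q (n+1) j
    have e1 : n + 1 + j + 1 = j + n + 2 := by omega
    have e2 : n + 1 + j = j + n + 1 := by omega
    rw [e1, e2] at h
    exact h
  have s1 : j + n + 2 - j = n + 2 := by omega
  have s2 : j + n + 2 - (j + 1) = n + 1 := by omega
  have s3 : j + n + 1 - j = n + 1 := by omega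
  have s4 : j + n - j = n := by omega
  have c1 : (n+1).choose 2 = n.choose 2 + n := by
    rw [Nat.choose_succ_succ n 1, Nat.choose_one_right]
    exact Nat.add_comm _ _
  have c2 : (n+2).choose 2 = n.choose 2 + n + (n+1) := by
    rw [Nat.choose_succ_succ (n+1) 1, Nat.choose_one_right, c1]
    omega
  simp only [Aq, s1, s2, s3, s4, gauss_eq_div]
  rw [show Nq q (j+n+2) (j+1) = Nq q (j+n+2) j * (q^(n+2) - 1) by rw [Nq_succ, s1]]
  rw [show Nq q (j+1) (j+1) = (q^(j+1)-1) * Nq q j j from Nq_succ' q j j]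
  rw [h2, h3, c2, c1]
  have ha : q^(j+1) - 1 ≠ 0 := ne_of_gt (hpow j)
  have hb : q^(n+1) - 1 ≠ 0 := ne_of_gt (hpow n)
  have hc : q^(n+2) - 1 ≠ 0 := ne_of_gt (hpow (n+1))
  simp only [pow_add, pow_succ, pow_zero, one_mul, pow_one] at ha hb hc ⊢
  have hc' : q ^ n * q ^ 2 - 1 ≠ 0 := by convert hc using 1; ring
  field_simp [ha, hb, hc, hc']
  ring

lemma coeff_top (q : ℝ) (hq : 1 < q) (j : ℕ) :
    q^j * Aq q (j+1) j + q^j*(q^(j+1)-1) * Aq q (j+1) (j+1)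
      = q^(j+1) * Aq q (j+1) j + 2*q^j*(q^(j+1)-1) * Aq q j j := by
  have hq1 : q - 1 ≠ 0 := by linarith
  have hE : Nq q j j ≠ 0 := ne_of_gt (Nq_pos q hq j j le_rfl)
  have h : Nq q (j+1) j = (q^(j+1)-1) * Nq q j j / (q - 1) := by
    rw [eq_div_iff hq1]
    have h := Nq_shift q 0 j
    simp only [Nat.zero_add, zero_add, pow_one] at h
    exact h
  have s1 : j + 1 - j = 1 := by omega
  simp only [Aq, s1, Nat.sub_self, gauss_diag q hq, gauss_eq_div]
  rw [h]
  norm_num [Nat.choose]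
  field_simp
  ring

lemma prod_step (q : ℝ) (r j : ℕ) :
    ∏ i ∈ Finset.range (j+1), (q^(r+1) - q^i)
      = q^(j+1) * ∏ i ∈ Finset.range (j+1), (q^r - q^i)
        + q^j * (q^(j+1) - 1) * ∏ i ∈ Finset.range j, (q^r - q^i) := by
  rw [Finset.prod_range_succ']
  have e : ∀ i ∈ Finset.range j, q^(r+1) - q^(i+1) = q * (q^r - q^i) := by
    intro i _
    rw [pow_succ, pow_succ]
    ring
  rw [Finset.prod_congr rfl e, Finset.prod_mul_distrib, Finset.prod_const,
    Finset.card_range, Finset.prod_range_succ]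
  rw [pow_succ q r, pow_succ q j, pow_zero]
  ring

lemma T_eq (q : ℝ) (k r : ℕ) :
    T q k r = ∑ j ∈ Finset.range (k+1), Aq q k j * ∏ i ∈ Finset.range j, (q ^ r - q ^ i) :=
  rfl

/-- Branching rule for the stable characters `τ_k`: for `k ≥ 2` and `r ≥ 0`,
`T_k(r+1) = q^k T_k(r) + 2 q^{k-1}(q^k - 1) T_{k-1}(r) + q^{k-2}(q^{k-1}-1)(q^k-1) T_{k-2}(r)`. -/
theorem tau_branching (q : ℝ) (hq : 1 < q) (k r : ℕ) (hk : 2 ≤ k) :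
    T q k (r + 1) =
      q ^ k * T q k r + 2 * q ^ (k - 1) * (q ^ k - 1) * T q (k - 1) r +
        q ^ (k - 2) * (q ^ (k - 1) - 1) * (q ^ k - 1) * T q (k - 2) r := by
  obtain ⟨m, rfl⟩ : ∃ m, k = m + 2 := ⟨k - 2, by omega⟩
  have e1 : m + 2 - 1 = m + 1 := rfl
  have e2 : m + 2 - 2 = m := rfl
  rw [e1, e2, T_eq, T_eq, T_eq, T_eq]
  -- Step 1: rewrite the LHS as a sum of coefficient × product over range (m+3)
  have step1 : ∑ j ∈ Finset.range (m+2+1), Aq q (m+2) j * ∏ i ∈ Finset.range j, (q ^ (r+1) - q ^ i)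
      = ∑ j ∈ Finset.range (m+3),
          (q^j * Aq q (m+2) j + q^j*(q^(j+1)-1) * Aq q (m+2) (j+1))
            * ∏ i ∈ Finset.range j, (q ^ r - q ^ i) := by
    simp only [add_mul, Finset.sum_add_distrib]
    rw [Finset.sum_range_succ
      (fun j => (q^j*(q^(j+1)-1) * Aq q (m+2) (j+1)) * ∏ i ∈ Finset.range j, (q ^ r - q ^ i)) (m+2)]
    rw [Aq_zero q (m+2) (m+2+1) (by omega)]
    rw [Finset.sum_range_succ'
      (fun j => (q^j * Aq q (m+2) j) * ∏ i ∈ Finset.range j, (q ^ r - q ^ i)) (m+2)]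
    rw [Finset.sum_range_succ'
      (fun j => Aq q (m+2) j * ∏ i ∈ Finset.range j, (q ^ (r+1) - q ^ i)) (m+2)]
    simp only [Finset.prod_range_zero, mul_one, pow_zero, one_mul, mul_zero, zero_mul, add_zero]
    rw [add_assoc, add_comm (Aq q (m+2) 0), ← add_assoc, ← Finset.sum_add_distrib]
    congr 1
    apply Finset.sum_congr rfl
    intro j _
    rw [prod_step]
    ring
  rw [step1]
  -- Step 2: rewrite the RHS likewise
  have z1 : Aq q (m+1) (m+2) = 0 := Aq_zero q (m+1) (m+2) (by omega)
  have z2 : Aq q m (m+1) = 0 := Aq_zero q m (m+1) (by omega)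
  have z3 : Aq q m (m+2) = 0 := Aq_zero q m (m+2) (by omega)
  have step2 :
      q ^ (m+2) * ∑ j ∈ Finset.range (m+2+1), Aq q (m+2) j * ∏ i ∈ Finset.range j, (q ^ r - q ^ i)
        + 2 * q ^ (m+1) * (q ^ (m+2) - 1) *
            ∑ j ∈ Finset.range (m+1+1), Aq q (m+1) j * ∏ i ∈ Finset.range j, (q ^ r - q ^ i)
        + q ^ m * (q ^ (m+1) - 1) * (q ^ (m+2) - 1) *
            ∑ j ∈ Finset.range (m+1), Aq q m j * ∏ i ∈ Finset.range j, (q ^ r - q ^ i)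
      = ∑ j ∈ Finset.range (m+3),
          (q^(m+2) * Aq q (m+2) j + 2*q^(m+1)*(q^(m+2)-1) * Aq q (m+1) j
            + q^m*(q^(m+1)-1)*(q^(m+2)-1) * Aq q m j)
            * ∏ i ∈ Finset.range j, (q ^ r - q ^ i) := by
    simp only [add_mul, Finset.sum_add_distrib]
    rw [Finset.sum_range_succ
      (fun j => (2*q^(m+1)*(q^(m+2)-1) * Aq q (m+1) j) * ∏ i ∈ Finset.range j, (q ^ r - q ^ i)) (m+2)]
    rw [Finset.sum_range_succ
      (fun j => (q^m*(q^(m+1)-1)*(q^(m+2)-1) * Aq q m j) * ∏ i ∈ Finset.range j, (q ^ r - q ^ i)) (m+2)]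
    rw [Finset.sum_range_succ
      (fun j => (q^m*(q^(m+1)-1)*(q^(m+2)-1) * Aq q m j) * ∏ i ∈ Finset.range j, (q ^ r - q ^ i)) (m+1)]
    rw [z1, z2, z3]
    simp only [mul_zero, zero_mul, add_zero]
    rw [Finset.mul_sum, Finset.mul_sum, Finset.mul_sum]
    simp only [mul_assoc]
  rw [step2]
  -- Step 3: compare coefficients
  apply Finset.sum_congr rfl
  intro j hj
  rw [Finset.mem_range] at hj
  rcases lt_trichotomy j (m+1) with h | h | h
  · -- j ≤ m : main case
    obtain ⟨n, rfl⟩ : ∃ n, m = j + n := ⟨m - j, by omega⟩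
    exact congrArg (fun z => z * _) (coeff_main q hq j n)
  · -- j = m + 1
    subst h
    have ct := coeff_top q hq (m+1)
    rw [z2]
    linear_combination (∏ i ∈ Finset.range (m+1), (q ^ r - q ^ i)) * ct
  · -- j = m + 2
    have : j = m + 2 := by omega
    subst this
    rw [Aq_zero q (m+2) (m+2+1) (by omega), z1, z3]
    ring
end
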